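/- arXiv:2501.00685 — 7 statements merged into one kernel-verified Lean document; each statement's English description precedes it below -/
import Mathlib

section
/- Let M ⊆ B(H) be a von Neumann algebra and let φ : Proj(M) → Proj(M) be an arbitrary map. Then V_φ = {a ∈ B(H) : s_ℓ^M(aq) ≤ φ(q) for every projection q ∈ M} is a quantum relation on M ⊆ B(H) (a weak*-closed M'-bimodule), and V_φ is operator reflexive: if a ∈ B(H) satisfies paq = 0 for all projections p, q ∈ M with pV_φq = {0}, then a ∈ V_φ. -/
open scoped ENNReal NNReal

noncomputable section

universe u

namespace QCG

/-- The weak* (σ-weak) topology on `B(H)`: the topology induced by the functionals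
`x ↦ ∑' n, ⟪x (ξ n), η n⟫` indexed by pairs of square-summable sequences `ξ, η : ℕ → H`. -/
def sigmaWeak (H : Type u) [NormedAddCommGroup H] [InnerProductSpace ℂ H] :
    TopologicalSpace (H →L[ℂ] H) :=
  TopologicalSpace.induced
    (fun a (p : {xe : (ℕ → H) × (ℕ → H) //
        Summable (fun n => ‖xe.1 n‖ ^ 2) ∧ Summable (fun n => ‖xe.2 n‖ ^ 2)}) =>
      (∑' n, (inner ℂ (a (p.1.1 n)) (p.1.2 n) : ℂ)))
    inferInstance

variable {H : Type u} [NormedAddCommGroup H] [InnerProductSpace ℂ H] [CompleteSpace H]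

/-- A set of operators is weak*-closed. -/
def IsWeakStarClosed (V : Set (H →L[ℂ] H)) : Prop :=
  @IsClosed _ (sigmaWeak H) V

/-- The weak*-closure of a set of operators. -/
def wclosure (S : Set (H →L[ℂ] H)) : Set (H →L[ℂ] H) :=
  @closure _ (sigmaWeak H) S

/-- A quantum relation on `M ⊆ B(H)`: a weak*-closed linear subspace of `B(H)` which is a
bimodule over the commutant `M'`. -/
structure IsQRel (M : VonNeumannAlgebra H) (V : Set (H →L[ℂ] H)) : Prop where
  zero_mem : (0 : H →L[ℂ] H) ∈ V
  add_mem : ∀ a b : H →L[ℂ] H, a ∈ V → b ∈ V → a + b ∈ V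
  smul_mem : ∀ (c : ℂ) (a : H →L[ℂ] H), a ∈ V → c • a ∈ V
  weakStarClosed : IsWeakStarClosed V
  bimodule : ∀ x ∈ M.commutant, ∀ v ∈ V, ∀ y ∈ M.commutant, x * v * y ∈ V

/-- An (orthogonal) projection belonging to the von Neumann algebra `M`. -/
def IsProjectionIn (M : VonNeumannAlgebra H) (p : H →L[ℂ] H) : Prop :=
  p ∈ M ∧ IsIdempotentElem p ∧ IsSelfAdjoint p

/-- `s` is the left `M`-support `s_ℓ^M(a)` of `a`: the smallest projection `q ∈ M` with
`q * a = a`.  (For projections `s, p`, the inequality `s ≤ p` is expressed as `p * s = s`.) -/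
def IsLeftSupport (M : VonNeumannAlgebra H) (a s : H →L[ℂ] H) : Prop :=
  IsProjectionIn M s ∧ s * a = a ∧
    ∀ p : H →L[ℂ] H, IsProjectionIn M p → p * a = a → p * s = s

/-- `s` is the `M`-support `s^M(ξ)` of the vector `ξ`: the smallest projection `q ∈ M`
with `q ξ = ξ`. -/
def IsVectorSupport (M : VonNeumannAlgebra H) (ξ : H) (s : H →L[ℂ] H) : Prop :=
  IsProjectionIn M s ∧ s ξ = ξ ∧
    ∀ p : H →L[ℂ] H, IsProjectionIn M p → p ξ = ξ → p * s = s

/-- A quantum coarse structure on `M ⊆ B(H)`: a family of quantum relations containing the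
diagonal `M'` and closed under subrelations, adjoints, (weak*-closures of) sums, and
(weak*-closed spans of) products. -/
structure IsQCoarse (M : VonNeumannAlgebra H) (𝒱 : Set (Set (H →L[ℂ] H))) : Prop where
  qrel : ∀ V ∈ 𝒱, IsQRel M V
  diag_mem : (M.commutant : Set (H →L[ℂ] H)) ∈ 𝒱
  subrel_mem : ∀ V₁ ∈ 𝒱, ∀ V₂ : Set (H →L[ℂ] H), IsQRel M V₂ → V₂ ⊆ V₁ → V₂ ∈ 𝒱
  star_mem : ∀ V ∈ 𝒱, (star '' V) ∈ 𝒱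
  add_mem : ∀ V₁ ∈ 𝒱, ∀ V₂ ∈ 𝒱,
    wclosure {v : H →L[ℂ] H | ∃ a ∈ V₁, ∃ b ∈ V₂, v = a + b} ∈ 𝒱
  mul_mem : ∀ V₁ ∈ 𝒱, ∀ V₂ ∈ 𝒱,
    wclosure ((Submodule.span ℂ {v : H →L[ℂ] H | ∃ a ∈ V₁, ∃ b ∈ V₂, v = a * b} :
      Submodule ℂ (H →L[ℂ] H)) : Set (H →L[ℂ] H)) ∈ 𝒱

/-- `V_φ = {a ∈ B(H) : s_ℓ^M(a q) ≤ φ(q) for every projection q ∈ M}`. -/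
def Vphi (M : VonNeumannAlgebra H) (φ : (H →L[ℂ] H) → (H →L[ℂ] H)) : Set (H →L[ℂ] H) :=
  {a | ∀ q : H →L[ℂ] H, IsProjectionIn M q →
      ∀ s : H →L[ℂ] H, IsLeftSupport M (a * q) s → φ q * s = s}

/-! ### Auxiliary lemmas -/

/-- Every operator has a left `M`-support: the orthogonal projection onto the closed
`M'`-invariant subspace generated by the range of `b`. -/
lemma exists_isLeftSupport (M : VonNeumannAlgebra H) (b : H →L[ℂ] H) :
    ∃ s : H →L[ℂ] H, IsLeftSupport M b s := by
  classical
  set S0 : Set H := {v | ∃ x ∈ M.commutant, ∃ ξ : H, v = x (b ξ)} with hS0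
  set K : Submodule ℂ H := (Submodule.span ℂ S0).topologicalClosure with hK
  haveI : CompleteSpace K := (Submodule.span ℂ S0).isClosed_topologicalClosure.completeSpace_coe
  set s : H →L[ℂ] H := K.subtypeL.comp (K.orthogonalProjectionOnto) with hs
  have hfix : ∀ v ∈ K, s v = v := fun v hv => Submodule.starProjection_eq_self_iff.mpr hv
  have hmemS0 : ∀ v ∈ S0, v ∈ K := fun v hv =>
    (Submodule.span ℂ S0).le_topologicalClosure (Submodule.subset_span hv)
  have hsK : ∀ ξ : H, s ξ ∈ K := fun ξ => (K.orthogonalProjectionOnto ξ).2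
  have hsa : IsSelfAdjoint s := isSelfAdjoint_starProjection K
  -- `K` is invariant under the commutant
  have hinv : ∀ x ∈ M.commutant, ∀ v ∈ K, x v ∈ K := by
    intro x hx
    have hCclosed : IsClosed ((K.comap (x : H →ₗ[ℂ] H) : Submodule ℂ H) : Set H) :=
      (Submodule.span ℂ S0).isClosed_topologicalClosure.preimage x.continuous
    have hle : K ≤ K.comap (x : H →ₗ[ℂ] H) := by
      refine Submodule.topologicalClosure_minimal _ (Submodule.span_le.2 ?_) hCclosed
      rintro v ⟨y, hy, ξ, rfl⟩
      refine Submodule.mem_comap.mpr ?_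
      exact hmemS0 _ ⟨x * y, mul_mem hx hy, ξ, rfl⟩
    exact fun v hv => hle hv
  -- `s` commutes with the commutant, hence `s ∈ M`
  have hxs : ∀ y ∈ M.commutant, s * y * s = y * s := by
    intro y hy
    ext ξ
    simp only [ContinuousLinearMap.mul_apply]
    exact hfix _ (hinv y hy _ (hsK ξ))
  have hcomm : ∀ x ∈ M.commutant, x * s = s * x := by
    intro x hx
    have h1 := hxs x hx
    have h2 := hxs (star x) (star_mem hx)
    have h3 := congrArg star h2
    simp only [star_mul, star_star, hsa.star_eq] at h3
    calc x * s = s * x * s := h1.symm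
    _ = s * (x * s) := by rw [mul_assoc]
    _ = s * x := h3
  have hsM : s ∈ M := by
    rw [← VonNeumannAlgebra.commutant_commutant M]
    exact VonNeumannAlgebra.mem_commutant_iff.mpr hcomm
  have hidem : IsIdempotentElem s := by
    ext ξ
    simp only [ContinuousLinearMap.mul_apply]
    exact hfix _ (hsK ξ)
  have hsb : s * b = b := by
    ext ξ
    simp only [ContinuousLinearMap.mul_apply]
    exact hfix _ (hmemS0 _ ⟨1, one_mem _, ξ, by simp⟩)
  refine ⟨s, ⟨hsM, hidem, hsa⟩, hsb, ?_⟩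
  intro p hp hpb
  have hpx : ∀ v ∈ K, p v = v := by
    intro v hv
    have hFclosed : IsClosed {w : H | p w = w} := isClosed_eq p.continuous continuous_id
    set F : Submodule ℂ H := LinearMap.eqLocus (p : H →ₗ[ℂ] H) (LinearMap.id) with hF
    have hFc : IsClosed (F : Set H) := hFclosed
    have hle : K ≤ F := by
      refine Submodule.topologicalClosure_minimal _ (Submodule.span_le.2 ?_) hFc
      rintro w ⟨y, hy, ξ, rfl⟩
      have hcy : p * y = y * p := VonNeumannAlgebra.mem_commutant_iff.mp hy p hp.1
      have : p (y (b ξ)) = y (b ξ) := by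
        have e1 : p (y (b ξ)) = (p * y) (b ξ) := rfl
        rw [e1, hcy]
        have e2 : (y * p) (b ξ) = y (p (b ξ)) := rfl
        rw [e2]
        have e3 : p (b ξ) = (p * b) ξ := rfl
        rw [e3, hpb]
      exact this
    exact hle hv
  ext ξ
  simp only [ContinuousLinearMap.mul_apply]
  exact hpx _ (hsK ξ)

/-- A "matrix coefficient" functional is weak*-continuous, hence its kernel is
weak*-closed. -/
lemma isWeakStarClosed_inner (ξ η : H) :
    IsWeakStarClosed {a : H →L[ℂ] H | (inner ℂ (a ξ) η : ℂ) = 0} := by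
  classical
  have hs1 : Summable (fun n : ℕ => ‖(if n = 0 then ξ else 0 : H)‖ ^ 2) := by
    apply summable_of_ne_finset_zero (s := {0})
    intro n hn
    simp only [Finset.mem_singleton] at hn
    simp [if_neg hn]
  have hs2 : Summable (fun n : ℕ => ‖(if n = 0 then η else 0 : H)‖ ^ 2) := by
    apply summable_of_ne_finset_zero (s := {0})
    intro n hn
    simp only [Finset.mem_singleton] at hn
    simp [if_neg hn]
  let F : (H →L[ℂ] H) → {xe : (ℕ → H) × (ℕ → H) //
      Summable (fun n => ‖xe.1 n‖ ^ 2) ∧ Summable (fun n => ‖xe.2 n‖ ^ 2)} → ℂ :=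
    fun a p => ∑' n, (inner ℂ (a (p.1.1 n)) (p.1.2 n) : ℂ)
  let p0 : {xe : (ℕ → H) × (ℕ → H) //
      Summable (fun n => ‖xe.1 n‖ ^ 2) ∧ Summable (fun n => ‖xe.2 n‖ ^ 2)} :=
    ⟨⟨fun n => if n = 0 then ξ else 0, fun n => if n = 0 then η else 0⟩, hs1, hs2⟩
  have h1 : @Continuous _ _ (sigmaWeak H) _ ((fun g : _ → ℂ => g p0) ∘ F) := by
    have h0 : @Continuous _ _ (TopologicalSpace.induced F inferInstance) _ F :=
      continuous_induced_dom
    exact @Continuous.comp _ _ _ (TopologicalSpace.induced F inferInstance) _ _ _ _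
      (continuous_apply p0) h0
  have h2 : ((fun g : _ → ℂ => g p0) ∘ F) = fun a : H →L[ℂ] H => (inner ℂ (a ξ) η : ℂ) := by
    funext a
    show (∑' n : ℕ, (inner ℂ (a (if n = 0 then ξ else 0)) (if n = 0 then η else 0) : ℂ))
        = inner ℂ (a ξ) η
    rw [tsum_eq_single 0 (fun n hn => by simp [if_neg hn])]
    simp
  rw [h2] at h1
  have hset : {a : H →L[ℂ] H | (inner ℂ (a ξ) η : ℂ) = 0}
      = (fun a : H →L[ℂ] H => (inner ℂ (a ξ) η : ℂ)) ⁻¹' {0} := by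
    ext a; simp
  rw [IsWeakStarClosed, hset]
  exact @IsClosed.preimage _ _ (sigmaWeak H) _ _ h1 {0} isClosed_singleton

/-- For a self-adjoint operator we can move it across the inner product. -/
lemma selfAdjoint_inner_swap {c : H →L[ℂ] H} (hc : IsSelfAdjoint c) (u w : H) :
    (inner ℂ (c u) w : ℂ) = inner ℂ u (c w) := by
  nth_rewrite 1 [← hc.adjoint_eq]
  exact ContinuousLinearMap.adjoint_inner_left c w u

/-- For any map `φ : Proj(M) → Proj(M)`, the set `V_φ` is a quantum relation on `M ⊆ B(H)`,
and it is operator reflexive: any `a ∈ B(H)` such that `p a q = 0` for all projections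
`p, q ∈ M` with `p V_φ q = {0}` belongs to `V_φ`. -/
theorem statement0 (M : VonNeumannAlgebra H)
    (φ : (H →L[ℂ] H) → (H →L[ℂ] H))
    (hφ : ∀ q : H →L[ℂ] H, IsProjectionIn M q → IsProjectionIn M (φ q)) :
    IsQRel M (Vphi M φ) ∧
      ∀ a : H →L[ℂ] H,
        (∀ p q : H →L[ℂ] H, IsProjectionIn M p → IsProjectionIn M q →
          (∀ v ∈ Vphi M φ, p * v * q = 0) → p * a * q = 0) →
        a ∈ Vphi M φ := by
  classical
  -- `V_φ` coincides with the set `W` below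
  have hVeq : Vphi M φ
      = {a : H →L[ℂ] H | ∀ q : H →L[ℂ] H, IsProjectionIn M q → φ q * (a * q) = a * q} := by
    ext a
    constructor
    · intro ha q hq
      obtain ⟨s, hs⟩ := exists_isLeftSupport M (a * q)
      have hφs : φ q * s = s := ha q hq s hs
      calc φ q * (a * q) = φ q * (s * (a * q)) := by rw [hs.2.1]
      _ = (φ q * s) * (a * q) := by rw [mul_assoc]
      _ = s * (a * q) := by rw [hφs]
      _ = a * q := hs.2.1
    · intro ha q hq s hs
      exact hs.2.2 (φ q) (hφ q hq) (ha q hq)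
  rw [hVeq]
  have hone : IsSelfAdjoint (1 : H →L[ℂ] H) := by
    rw [IsSelfAdjoint]; exact star_one _
  constructor
  · refine ⟨?_, ?_, ?_, ?_, ?_⟩
    · intro q hq
      simp
    · intro a b ha hb q hq
      rw [add_mul, mul_add, ha q hq, hb q hq]
    · intro c a ha q hq
      rw [smul_mul_assoc, mul_smul_comm, ha q hq]
    · -- weak*-closedness
      have hset : {a : H →L[ℂ] H | ∀ q : H →L[ℂ] H, IsProjectionIn M q →
            φ q * (a * q) = a * q}
          = ⋂ (q : {q : H →L[ℂ] H // IsProjectionIn M q}) (ξ : H) (η : H),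
              {a : H →L[ℂ] H |
                (inner ℂ (a (q.1 ξ)) (((1 : H →L[ℂ] H) - φ q.1) η) : ℂ) = 0} := by
        ext a
        simp only [Set.mem_iInter, Set.mem_setOf_eq]
        constructor
        · rintro h ⟨q, hq⟩ ξ η
          have hc : IsSelfAdjoint ((1 : H →L[ℂ] H) - φ q) := hone.sub (hφ q hq).2.2
          have hz : ((1 : H →L[ℂ] H) - φ q) * (a * q) = 0 := by
            rw [sub_mul, one_mul, h q hq, sub_self]
          have hz' : ((1 : H →L[ℂ] H) - φ q) (a (q ξ)) = 0 := by
            have e : ((1 : H →L[ℂ] H) - φ q) (a (q ξ))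
                = (((1 : H →L[ℂ] H) - φ q) * (a * q)) ξ := rfl
            rw [e, hz]; simp
          rw [← selfAdjoint_inner_swap hc, hz', inner_zero_left]
        · intro h q hq
          have hc : IsSelfAdjoint ((1 : H →L[ℂ] H) - φ q) := hone.sub (hφ q hq).2.2
          ext ξ
          have h0 : ((1 : H →L[ℂ] H) - φ q) (a (q ξ)) = 0 := by
            apply ext_inner_right ℂ
            intro η
            rw [inner_zero_left, selfAdjoint_inner_swap hc]
            exact h ⟨q, hq⟩ ξ η
          have h0' : a (q ξ) - φ q (a (q ξ)) = 0 := by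
            simpa [ContinuousLinearMap.sub_apply] using h0
          have : φ q (a (q ξ)) = a (q ξ) := by
            have := sub_eq_zero.mp h0'
            exact this.symm
          simpa [ContinuousLinearMap.mul_apply] using this
      rw [IsWeakStarClosed, hset]
      refine @isClosed_iInter _ _ (sigmaWeak H) _ fun q => ?_
      refine @isClosed_iInter _ _ (sigmaWeak H) _ fun ξ => ?_
      refine @isClosed_iInter _ _ (sigmaWeak H) _ fun η => ?_
      exact isWeakStarClosed_inner (q.1 ξ) (((1 : H →L[ℂ] H) - φ q.1) η)
    · -- bimodule
      intro x hx a ha y hy q hq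
      have h1 : q * y = y * q := VonNeumannAlgebra.mem_commutant_iff.mp hy q hq.1
      have h2 : φ q * x = x * φ q := VonNeumannAlgebra.mem_commutant_iff.mp hx (φ q) (hφ q hq).1
      have h3 : φ q * (a * q) = a * q := ha q hq
      have e : (x * a * y) * q = x * (a * q) * y := by
        calc (x * a * y) * q = x * a * (y * q) := by rw [mul_assoc]
        _ = x * a * (q * y) := by rw [h1]
        _ = x * (a * q) * y := by
            rw [← mul_assoc, mul_assoc x a q]
      rw [e]
      calc φ q * (x * (a * q) * y) = (φ q * x) * (a * q) * y := by
            rw [← mul_assoc, ← mul_assoc]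
      _ = (x * φ q) * (a * q) * y := by rw [h2]
      _ = x * (φ q * (a * q)) * y := by rw [mul_assoc x (φ q) (a * q)]
      _ = x * (a * q) * y := by rw [h3]
  · -- operator reflexivity
    intro a ha q hq
    set p : H →L[ℂ] H := (1 : H →L[ℂ] H) - φ q with hp
    have hpproj : IsProjectionIn M p :=
      ⟨sub_mem (one_mem M) (hφ q hq).1, (hφ q hq).2.1.one_sub, hone.sub (hφ q hq).2.2⟩
    have hvanish : ∀ v ∈ {a : H →L[ℂ] H | ∀ q : H →L[ℂ] H, IsProjectionIn M q →
        φ q * (a * q) = a * q}, p * v * q = 0 := by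
      intro v hv
      have hv' := hv q hq
      rw [hp, sub_mul, sub_mul, one_mul, mul_assoc, hv', sub_self]
    have h0 : p * a * q = 0 := ha p q hpproj hq hvanish
    have h0' : a * q - φ q * (a * q) = 0 := by
      rw [← mul_assoc]
      calc a * q - φ q * a * q = ((1 : H →L[ℂ] H) - φ q) * a * q := by
            rw [sub_mul, sub_mul, one_mul]
      _ = 0 := h0
    have := sub_eq_zero.mp h0'
    exact this.symm

end QCG
end
end

section
/- Let M ⊆ B(H) be a von Neumann algebra, let V₁ and V₂ be quantum relations on M ⊆ B(H), and let P denote the set of orthogonal projections in M ⊗̄ B(ℓ²). For all p, q ∈ P the following are equivalent: (a) there exist a₁ ∈ V₁ and a₂ ∈ V₂ with p(a₁a₂ ⊗ 1)q ≠ 0; (b) for every r ∈ P, either there exists a₁ ∈ V₁ with p(a₁⊗1)r ≠ 0, or there exists a₂ ∈ V₂ with (1−r)(a₂⊗1)q ≠ 0. In other words, the intrinsic quantum relation associated to the product V₁V₂ equals the composition R_{V₁} ∘ R_{V₂} = {(p,q) ∈ P × P : for all r ∈ P, (p,r) ∈ R_{V₁} or (1−r, q) ∈ R_{V₂}}. 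-/
open scoped ENNReal NNReal

noncomputable section

universe u

namespace QCG

variable {H : Type u} [NormedAddCommGroup H] [InnerProductSpace ℂ H] [CompleteSpace H]

/-- `ℓ²(ℕ, H)`, a model of `H ⊗ ℓ²`. -/
abbrev ampSpace (H : Type u) [NormedAddCommGroup H] [InnerProductSpace ℂ H] : Type u :=
  lp (fun _ : ℕ => H) 2

/-- `amp` is the amplification map `a ↦ a ⊗ 1`, acting componentwise on `ℓ²(ℕ, H)`. -/
def IsAmplification (amp : (H →L[ℂ] H) → (ampSpace H →L[ℂ] ampSpace H)) : Prop :=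
  ∀ (a : H →L[ℂ] H) (ξ : ampSpace H) (n : ℕ), (amp a ξ) n = a (ξ n)

/-- `P` is an orthogonal projection in `M ⊗̄ B(ℓ²)`, the commutant in `B(ℓ²(ℕ,H))` of
`{b ⊗ 1 : b ∈ M'}`. -/
def IsAmpProjection (M : VonNeumannAlgebra H)
    (amp : (H →L[ℂ] H) → (ampSpace H →L[ℂ] ampSpace H))
    (P : ampSpace H →L[ℂ] ampSpace H) : Prop :=
  IsIdempotentElem P ∧ IsSelfAdjoint P ∧ ∀ b ∈ M.commutant, amp b * P = P * amp b

end QCG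

/-!
If `p (a₁ ⊗ 1) r = 0` and `(1 - r) (a₂ ⊗ 1) q = 0`, then splitting `1 = r + (1 - r)` between
`a₁` and `a₂` gives `p (a₁ a₂ ⊗ 1) q = 0`. Conversely, let `r` be the projection onto the closed
span of the ranges of the operators `(a₂ ⊗ 1) q`, `a₂ ∈ V₂`. As `V₂` is a left `M'`-module, this
subspace is invariant under the self-adjoint set `M' ⊗ 1`, so `r ∈ M ⊗̄ B(ℓ²)`. By construction
`(1 - r) (a₂ ⊗ 1) q = 0` for all `a₂ ∈ V₂`, so some `p (a₁ ⊗ 1) r` is nonzero, and then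
`p (a₁ ⊗ 1)` cannot vanish on the range of every `(a₂ ⊗ 1) q`.
-/

section ClosedRangeSpan

open Module.End

variable {𝕜 E F : Type*} [RCLike 𝕜] [NormedAddCommGroup E] [InnerProductSpace 𝕜 E]
  [NormedAddCommGroup F] [InnerProductSpace 𝕜 F]

theorem Submodule.commute_starProjection [CompleteSpace E] {T : E →L[𝕜] E} {K : Submodule 𝕜 E}
    [K.HasOrthogonalProjection] (hK : K ∈ invtSubmodule T)
    (hK' : K ∈ invtSubmodule T.adjoint) : Commute K.starProjection T :=
  (ContinuousLinearMap.IsIdempotentElem.commute_iff K.isIdempotentElem_starProjection).mpr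
    ⟨by rwa [K.range_starProjection],
      by rw [K.ker_starProjection]; exact ContinuousLinearMap.orthogonal_mem_invtSubmodule hK'⟩

def closedRangeSpan (T : Set (E →L[𝕜] F)) : Submodule 𝕜 F :=
  (Submodule.span 𝕜 (⋃ t ∈ T, Set.range t)).topologicalClosure

instance [CompleteSpace F] (T : Set (E →L[𝕜] F)) : CompleteSpace (closedRangeSpan T) :=
  Submodule.topologicalClosure.completeSpace _

theorem apply_mem_closedRangeSpan {T : Set (E →L[𝕜] F)} {t : E →L[𝕜] F} (ht : t ∈ T) (x : E) :
    t x ∈ closedRangeSpan T :=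
  Submodule.le_topologicalClosure _ <|
    Submodule.subset_span <| Set.mem_biUnion ht (Set.mem_range_self x)

theorem closedRangeSpan_le_ker {G : Type*} [NormedAddCommGroup G] [NormedSpace 𝕜 G]
    {T : Set (E →L[𝕜] F)} {f : F →L[𝕜] G} (h : ∀ t ∈ T, f ∘L t = 0) :
    closedRangeSpan T ≤ f.ker := by
  refine Submodule.topologicalClosure_minimal _ ?_ f.isClosed_ker
  rw [Submodule.span_le]
  refine Set.iUnion₂_subset fun t ht => ?_
  rintro _ ⟨x, rfl⟩
  exact congr($(h t ht) x)

theorem closedRangeSpan_mem_invtSubmodule {T : Set (E →L[𝕜] E)} {b : E →L[𝕜] E}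
    (h : ∀ t ∈ T, b * t ∈ T) : closedRangeSpan T ∈ invtSubmodule b := by
  refine Submodule.topologicalClosure_mem_invtSubmodule ?_
  rw [mem_invtSubmodule_iff_map_le, Submodule.map_span_le]
  refine Set.iUnion₂_subset fun t ht => ?_
  rintro _ ⟨x, rfl⟩
  exact Submodule.subset_span <| Set.mem_biUnion (h t ht) (Set.mem_range_self x)

variable [CompleteSpace E] {T : Set (E →L[𝕜] E)}

theorem starProjection_closedRangeSpan_mul {t : E →L[𝕜] E} (ht : t ∈ T) :
    (closedRangeSpan T).starProjection * t = t :=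
  ContinuousLinearMap.ext fun x =>
    Submodule.starProjection_eq_self_iff.mpr (apply_mem_closedRangeSpan ht x)

theorem exists_mul_ne_zero_of_mul_starProjection_closedRangeSpan_ne_zero {f : E →L[𝕜] E}
    (h : f * (closedRangeSpan T).starProjection ≠ 0) : ∃ t ∈ T, f * t ≠ 0 := by
  contrapose! h
  ext x
  exact closedRangeSpan_le_ker h (Submodule.starProjection_apply_mem _ x)

end ClosedRangeSpan

theorem mul_mul_mul_eq_zero_of_mul_eq_zero_of_one_sub_mul {R : Type*} [Ring R] {p a b q r : R}
    (h₁ : p * a * r = 0) (h₂ : (1 - r) * b * q = 0) : p * (a * b) * q = 0 :=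
  calc p * (a * b) * q = p * a * r * b * q + p * a * ((1 - r) * b * q) := by noncomm_ring
    _ = 0 := by rw [h₁, h₂]; simp

namespace QCG

variable {H : Type u} [NormedAddCommGroup H] [InnerProductSpace ℂ H]

theorem IsAmplification.map_mul {amp : (H →L[ℂ] H) → (ampSpace H →L[ℂ] ampSpace H)}
    (hamp : IsAmplification amp) (a b : H →L[ℂ] H) : amp (a * b) = amp a * amp b :=
  ContinuousLinearMap.ext fun ξ => lp.ext <| funext fun n => by
    change amp (a * b) ξ n = amp a (amp b ξ) n
    rw [hamp, hamp, hamp]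
    rfl

variable [CompleteSpace H]

theorem IsAmplification.adjoint_eq {amp : (H →L[ℂ] H) → (ampSpace H →L[ℂ] ampSpace H)}
    (hamp : IsAmplification amp) (a : H →L[ℂ] H) : (amp a).adjoint = amp (star a) := by
  refine ((ContinuousLinearMap.eq_adjoint_iff _ _).mpr fun ξ η => ?_).symm
  rw [lp.inner_eq_tsum, lp.inner_eq_tsum]
  congr 1
  funext n
  rw [hamp, hamp, ContinuousLinearMap.star_eq_adjoint, ContinuousLinearMap.adjoint_inner_left]

theorem statement2_general (M : VonNeumannAlgebra H) (V₁ V₂ : Set (H →L[ℂ] H))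
    (hV₂ : IsQRel M V₂)
    (amp : (H →L[ℂ] H) → (ampSpace H →L[ℂ] ampSpace H)) (hamp : IsAmplification amp)
    (p q : ampSpace H →L[ℂ] ampSpace H) :
    (∃ a₁ ∈ V₁, ∃ a₂ ∈ V₂, p * amp (a₁ * a₂) * q ≠ 0) ↔
      ∀ r : ampSpace H →L[ℂ] ampSpace H, IsAmpProjection M amp r →
        (∃ a₁ ∈ V₁, p * amp a₁ * r ≠ 0) ∨ (∃ a₂ ∈ V₂, (1 - r) * amp a₂ * q ≠ 0) := by
  constructor
  · rintro ⟨a₁, ha₁, a₂, ha₂, hne⟩ r -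
    by_contra! ⟨h₁, h₂⟩
    exact hne <| hamp.map_mul a₁ a₂ ▸
      mul_mul_mul_eq_zero_of_mul_eq_zero_of_one_sub_mul (h₁ a₁ ha₁) (h₂ a₂ ha₂)
  · intro h
    set T := (fun a => amp a * q) '' V₂
    have hinv : ∀ b ∈ M.commutant, closedRangeSpan T ∈ Module.End.invtSubmodule (amp b) := by
      refine fun b hb => closedRangeSpan_mem_invtSubmodule ?_
      rintro _ ⟨a, ha, rfl⟩
      refine ⟨b * a, by simpa using hV₂.bimodule b hb a ha 1 (one_mem _), ?_⟩
      change amp (b * a) * q = amp b * (amp a * q)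
      rw [hamp.map_mul, mul_assoc]
    set r := (closedRangeSpan T).starProjection
    have hr : IsAmpProjection M amp r :=
      ⟨Submodule.isIdempotentElem_starProjection _, isSelfAdjoint_starProjection _,
        fun b hb => (Submodule.commute_starProjection (hinv b hb)
          (hamp.adjoint_eq b ▸ hinv _ (star_mem hb))).eq.symm⟩
    obtain ⟨a₁, ha₁, hne⟩ | ⟨a₂, ha₂, hne⟩ := h r hr
    · obtain ⟨_, ⟨a₂, ha₂, rfl⟩, hne⟩ :=
        exists_mul_ne_zero_of_mul_starProjection_closedRangeSpan_ne_zero hne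
      exact ⟨a₁, ha₁, a₂, ha₂, by simpa only [hamp.map_mul, mul_assoc] using hne⟩
    · refine absurd ?_ hne
      rw [mul_assoc, sub_mul, one_mul,
        starProjection_closedRangeSpan_mul (Set.mem_image_of_mem _ ha₂), sub_self]

/-- Composition of intrinsic quantum relations: for quantum relations `V₁, V₂` on
`M ⊆ B(H)` and projections `p, q ∈ M ⊗̄ B(ℓ²)`, one has `(p,q) ∈ R_{V₁V₂}` if and only if
for every projection `r ∈ M ⊗̄ B(ℓ²)`, either `(p,r) ∈ R_{V₁}` or `(1-r, q) ∈ R_{V₂}`. -/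
theorem statement2 (M : VonNeumannAlgebra H) (V₁ V₂ : Set (H →L[ℂ] H))
    (hV₁ : IsQRel M V₁) (hV₂ : IsQRel M V₂)
    (amp : (H →L[ℂ] H) → (ampSpace H →L[ℂ] ampSpace H)) (hamp : IsAmplification amp)
    (p q : ampSpace H →L[ℂ] ampSpace H)
    (hp : IsAmpProjection M amp p) (hq : IsAmpProjection M amp q) :
    (∃ a₁ ∈ V₁, ∃ a₂ ∈ V₂, p * amp (a₁ * a₂) * q ≠ 0) ↔
      ∀ r : ampSpace H →L[ℂ] ampSpace H, IsAmpProjection M amp r →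
        (∃ a₁ ∈ V₁, p * amp a₁ * r ≠ 0) ∨ (∃ a₂ ∈ V₂, (1 - r) * amp a₂ * q ≠ 0) :=
  statement2_general M V₁ V₂ hV₂ amp hamp p q

end QCG
end
end

section
/- Let (M ⊆ B(H), 𝒱) be a quantum coarse space. Then 𝒱 is metrizable — i.e., there exists a quantum metric (V_t)_{t≥0} on M ⊆ B(H) with 𝒱 = {V : V is a quantum relation on M ⊆ B(H) and V ⊆ V_t for some t ≥ 0} — if and only if 𝒱 is countably generated, i.e., there is a countable family 𝐔 of quantum relations on M ⊆ B(H) such that 𝒱 is the smallest quantum coarse structure on M ⊆ B(H) containing 𝐔. -/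
open scoped ENNReal NNReal Topology
set_option linter.unusedSectionVars false
noncomputable section
universe u
namespace QCG

variable {H : Type u} [NormedAddCommGroup H] [InnerProductSpace ℂ H] [CompleteSpace H]

abbrev pairIdx (H : Type u) [NormedAddCommGroup H] [InnerProductSpace ℂ H] :=
  {xe : (ℕ → H) × (ℕ → H) //
        Summable (fun n => ‖xe.1 n‖ ^ 2) ∧ Summable (fun n => ‖xe.2 n‖ ^ 2)}

abbrev gmap : (H →L[ℂ] H) → pairIdx H → ℂ :=
  fun a p => (∑' n, (inner ℂ (a (p.1.1 n)) (p.1.2 n) : ℂ))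

lemma sigmaWeak_eq : sigmaWeak H = TopologicalSpace.induced (gmap (H := H)) inferInstance := rfl

lemma continuous_gmap :
    Continuous[sigmaWeak H, Pi.topologicalSpace] (gmap (H := H)) :=
  continuous_induced_dom

lemma summable_inner (a : H →L[ℂ] H) (ξ η : ℕ → H) (hξ : Summable fun n => ‖ξ n‖ ^ 2)
    (hη : Summable fun n => ‖η n‖ ^ 2) :
    Summable fun n => (inner ℂ (a (ξ n)) (η n) : ℂ) := by
  apply Summable.of_norm
  apply Summable.of_nonneg_of_le (fun n => norm_nonneg _)
    (fun n => ?_) (((hξ.add hη).mul_left ‖a‖))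
  calc ‖(inner ℂ (a (ξ n)) (η n) : ℂ)‖ ≤ ‖a (ξ n)‖ * ‖η n‖ := norm_inner_le_norm _ _
    _ ≤ (‖a‖ * ‖ξ n‖) * ‖η n‖ := by
        exact mul_le_mul_of_nonneg_right (a.le_opNorm _) (norm_nonneg _)
    _ = ‖a‖ * (‖ξ n‖ * ‖η n‖) := by ring
    _ ≤ ‖a‖ * (‖ξ n‖ ^ 2 + ‖η n‖ ^ 2) := by
        apply mul_le_mul_of_nonneg_left ?_ (norm_nonneg a)
        nlinarith [sq_nonneg (‖ξ n‖ - ‖η n‖), norm_nonneg (ξ n), norm_nonneg (η n)]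

lemma continuous_pairing (p : pairIdx H) :
    Continuous[sigmaWeak H, inferInstance]
      (fun a : H →L[ℂ] H => ∑' n, (inner ℂ (a (p.1.1 n)) (p.1.2 n) : ℂ)) := by
  have : (fun a : H →L[ℂ] H => ∑' n, (inner ℂ (a (p.1.1 n)) (p.1.2 n) : ℂ))
      = (fun f : pairIdx H → ℂ => f p) ∘ gmap (H := H) := rfl
  rw [this]
  exact @Continuous.comp _ _ _ (sigmaWeak H) _ _ _ _ (continuous_apply p) continuous_gmap

/-- Addition is jointly continuous for the σ-weak topology. -/
lemma continuous_add_sigmaWeak :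
    Continuous[@instTopologicalSpaceProd _ _ (sigmaWeak H) (sigmaWeak H), sigmaWeak H]
      (fun q : (H →L[ℂ] H) × (H →L[ℂ] H) => q.1 + q.2) := by
  letI := sigmaWeak H
  rw [sigmaWeak_eq]
  apply continuous_induced_rng.2
  have : (gmap (H := H) ∘ fun q : (H →L[ℂ] H) × (H →L[ℂ] H) => q.1 + q.2)
      = fun q => gmap (H := H) q.1 + gmap (H := H) q.2 := by
    funext q p
    simp only [gmap, Function.comp_apply, Pi.add_apply, ContinuousLinearMap.add_apply,
      inner_add_left]
    exact Summable.tsum_add (summable_inner _ _ _ p.2.1 p.2.2) (summable_inner _ _ _ p.2.1 p.2.2)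
  rw [this]
  exact ((continuous_gmap.comp continuous_fst).add (continuous_gmap.comp continuous_snd))

lemma continuous_smul_sigmaWeak (c : ℂ) :
    Continuous[sigmaWeak H, sigmaWeak H] (fun a : H →L[ℂ] H => c • a) := by
  letI := sigmaWeak H
  rw [sigmaWeak_eq]
  apply continuous_induced_rng.2
  have : (gmap (H := H) ∘ fun a : H →L[ℂ] H => c • a)
      = fun a => (starRingEnd ℂ) c • gmap (H := H) a := by
    funext a p
    simp only [gmap, Function.comp_apply, Pi.smul_apply, ContinuousLinearMap.smul_apply,
      inner_smul_left, smul_eq_mul]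
    exact tsum_mul_left
  rw [this]
  exact ((continuous_gmap (H := H)).const_smul ((starRingEnd ℂ) c))


lemma summable_comp (y : H →L[ℂ] H) (ξ : ℕ → H) (hξ : Summable fun n => ‖ξ n‖ ^ 2) :
    Summable fun n => ‖y (ξ n)‖ ^ 2 := by
  apply Summable.of_nonneg_of_le (fun n => sq_nonneg _) (fun n => ?_) (hξ.mul_left (‖y‖^2))
  calc ‖y (ξ n)‖ ^ 2 ≤ (‖y‖ * ‖ξ n‖) ^ 2 := by
        apply pow_le_pow_left₀ (norm_nonneg _) (y.le_opNorm _)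
    _ = ‖y‖ ^ 2 * ‖ξ n‖ ^ 2 := by ring

/-- `a ↦ x * a * y` is σ-weakly continuous. -/
lemma continuous_conjMul (x y : H →L[ℂ] H) :
    Continuous[sigmaWeak H, sigmaWeak H] (fun a : H →L[ℂ] H => x * a * y) := by
  letI := sigmaWeak H
  rw [sigmaWeak_eq]
  apply continuous_induced_rng.2
  apply continuous_pi
  intro p
  have : (fun a : H →L[ℂ] H => gmap (H := H) (x * a * y) p)
      = fun a : H →L[ℂ] H => ∑' n, (inner ℂ
          (a ((fun n => y (p.1.1 n)) n)) ((fun n => (ContinuousLinearMap.adjoint x) (p.1.2 n)) n) : ℂ) := by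
    funext a
    show (∑' n, (inner ℂ ((x * a * y) (p.1.1 n)) (p.1.2 n) : ℂ)) = _
    refine tsum_congr fun n => ?_
    have h : (x * a * y) (p.1.1 n) = x (a (y (p.1.1 n))) := rfl
    rw [h, ← ContinuousLinearMap.adjoint_inner_right]
  rw [show (fun a : H →L[ℂ] H => (gmap (H := H) ∘ fun a => x * a * y) a p) = _ from this]
  exact continuous_pairing ⟨(fun n => y (p.1.1 n), fun n => (ContinuousLinearMap.adjoint x) (p.1.2 n)),
    summable_comp y _ p.2.1, summable_comp _ _ p.2.2⟩

/-- `star` is σ-weakly continuous. -/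
lemma continuous_star_sigmaWeak :
    Continuous[sigmaWeak H, sigmaWeak H] (fun a : H →L[ℂ] H => star a) := by
  letI := sigmaWeak H
  rw [sigmaWeak_eq]
  apply continuous_induced_rng.2
  apply continuous_pi
  intro p
  have : (fun a : H →L[ℂ] H => gmap (H := H) (star a) p)
      = fun a : H →L[ℂ] H => (starRingEnd ℂ)
          (∑' n, (inner ℂ (a (p.1.2 n)) (p.1.1 n) : ℂ)) := by
    funext a
    show (∑' n, (inner ℂ ((star a) (p.1.1 n)) (p.1.2 n) : ℂ)) = _
    rw [show ((starRingEnd ℂ) (∑' n, (inner ℂ (a (p.1.2 n)) (p.1.1 n) : ℂ)))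
        = ∑' n, (starRingEnd ℂ) (inner ℂ (a (p.1.2 n)) (p.1.1 n) : ℂ) from tsum_star]
    refine tsum_congr fun n => ?_
    rw [ContinuousLinearMap.star_eq_adjoint, ContinuousLinearMap.adjoint_inner_left,
      ← inner_conj_symm]
  rw [show (fun a : H →L[ℂ] H => (gmap (H := H) ∘ fun a => star a) a p) = _ from this]
  exact Complex.continuous_conj.comp
    (continuous_pairing ⟨(p.1.2, p.1.1), p.2.2, p.2.1⟩)

/-- A quantum metric on `M ⊆ B(H)`: a family `(V_t)_{t ≥ 0}` of weak*-closed operator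
systems with `V_0 = M'`, `V_t · V_s ⊆ V_{t+s}`, and `V_t = ⋂_{s > t} V_s`. -/
structure IsQMetric (M : VonNeumannAlgebra H) (V : ℝ≥0 → Set (H →L[ℂ] H)) : Prop where
  zero_mem : ∀ t : ℝ≥0, (0 : H →L[ℂ] H) ∈ V t
  add_mem : ∀ t : ℝ≥0, ∀ a b : H →L[ℂ] H, a ∈ V t → b ∈ V t → a + b ∈ V t
  smul_mem : ∀ t : ℝ≥0, ∀ (c : ℂ) (a : H →L[ℂ] H), a ∈ V t → c • a ∈ V t
  one_mem : ∀ t : ℝ≥0, (1 : H →L[ℂ] H) ∈ V t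
  star_mem : ∀ t : ℝ≥0, ∀ a : H →L[ℂ] H, a ∈ V t → star a ∈ V t
  weakStarClosed : ∀ t : ℝ≥0, IsWeakStarClosed (V t)
  zero_eq : V 0 = (M.commutant : Set (H →L[ℂ] H))
  mul_mem : ∀ t s : ℝ≥0, ∀ a ∈ V t, ∀ b ∈ V s, a * b ∈ V (t + s)
  inter_eq : ∀ t : ℝ≥0, V t = ⋂ s ∈ {s : ℝ≥0 | t < s}, V s


section
variable {M : VonNeumannAlgebra H}

lemma wclosure_subset {S : Set (H →L[ℂ] H)} : S ⊆ wclosure S :=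
  by letI := sigmaWeak H; exact subset_closure

lemma wclosure_min {S T : Set (H →L[ℂ] H)} (h : S ⊆ T) (hT : IsWeakStarClosed T) :
    wclosure S ⊆ T :=
  by letI := sigmaWeak H; exact closure_minimal h hT

lemma isWeakStarClosed_wclosure (S : Set (H →L[ℂ] H)) : IsWeakStarClosed (wclosure S) :=
  by letI := sigmaWeak H; exact isClosed_closure

lemma star_image_wclosure (S : Set (H →L[ℂ] H)) :
    star '' wclosure S ⊆ wclosure (star '' S) := by
  letI := sigmaWeak H
  exact image_closure_subset_closure_image continuous_star_sigmaWeak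

/-- Closure of a subspace-bimodule is a quantum relation. -/
lemma isQRel_wclosure (S : Set (H →L[ℂ] H))
    (h0 : (0 : H →L[ℂ] H) ∈ S)
    (hadd : ∀ a ∈ S, ∀ b ∈ S, a + b ∈ S)
    (hsmul : ∀ (c : ℂ), ∀ a ∈ S, c • a ∈ S)
    (hbi : ∀ x ∈ M.commutant, ∀ v ∈ S, ∀ y ∈ M.commutant, x * v * y ∈ S) :
    IsQRel M (wclosure S) := by
  letI := sigmaWeak H
  unfold wclosure
  refine ⟨wclosure_subset h0, ?_, ?_, isWeakStarClosed_wclosure S, ?_⟩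
  · intro a b ha hb
    exact map_mem_closure₂ continuous_add_sigmaWeak ha hb (fun x hx y hy => hadd x hx y hy)
  · intro c a ha
    exact map_mem_closure (continuous_smul_sigmaWeak c) ha (fun x hx => hsmul c x hx)
  · intro x hx v hv y hy
    exact map_mem_closure (f := fun a => x * a * y) (continuous_conjMul x y) hv (fun w hw => hbi x hx w hw y hy)

lemma isQRel_star {V : Set (H →L[ℂ] H)} (hV : IsQRel M V) : IsQRel M (star '' V) := by
  letI := sigmaWeak H
  have himg : star '' V = (fun a : H →L[ℂ] H => star a) ⁻¹' V := by
    ext a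
    constructor
    · rintro ⟨b, hb, rfl⟩; simpa using hb
    · intro ha; exact ⟨star a, ha, star_star a⟩
  refine ⟨⟨0, hV.zero_mem, star_zero _⟩, ?_, ?_, ?_, ?_⟩
  · rintro a b ⟨a', ha', rfl⟩ ⟨b', hb', rfl⟩
    exact ⟨a' + b', hV.add_mem _ _ ha' hb', by simp⟩
  · rintro c a ⟨a', ha', rfl⟩
    exact ⟨(starRingEnd ℂ) c • a', hV.smul_mem _ _ ha', by simp⟩
  · rw [himg]
    exact IsClosed.preimage continuous_star_sigmaWeak hV.weakStarClosed
  · rintro x hx v ⟨v', hv', rfl⟩ y hy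
    refine ⟨star y * v' * star x, hV.bimodule _ (star_mem hy) _ hv' _ (star_mem hx), ?_⟩
    simp [star_mul, mul_assoc]


variable (M) in
def addCl (V₁ V₂ : Set (H →L[ℂ] H)) : Set (H →L[ℂ] H) :=
  wclosure {v : H →L[ℂ] H | ∃ a ∈ V₁, ∃ b ∈ V₂, v = a + b}

variable (M) in
def mulCl (V₁ V₂ : Set (H →L[ℂ] H)) : Set (H →L[ℂ] H) :=
  wclosure ((Submodule.span ℂ {v : H →L[ℂ] H | ∃ a ∈ V₁, ∃ b ∈ V₂, v = a * b} :
      Submodule ℂ (H →L[ℂ] H)) : Set (H →L[ℂ] H))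

def symCl (V : Set (H →L[ℂ] H)) : Set (H →L[ℂ] H) := addCl V (star '' V)

lemma isQRel_addCl {V₁ V₂ : Set (H →L[ℂ] H)} (h₁ : IsQRel M V₁) (h₂ : IsQRel M V₂) :
    IsQRel M (addCl V₁ V₂) := by
  apply isQRel_wclosure
  · exact ⟨0, h₁.zero_mem, 0, h₂.zero_mem, by simp⟩
  · rintro _ ⟨a, ha, b, hb, rfl⟩ _ ⟨a', ha', b', hb', rfl⟩
    exact ⟨a + a', h₁.add_mem _ _ ha ha', b + b', h₂.add_mem _ _ hb hb', by abel⟩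
  · rintro c _ ⟨a, ha, b, hb, rfl⟩
    exact ⟨c • a, h₁.smul_mem _ _ ha, c • b, h₂.smul_mem _ _ hb, by simp⟩
  · rintro x hx _ ⟨a, ha, b, hb, rfl⟩ y hy
    exact ⟨x * a * y, h₁.bimodule _ hx _ ha _ hy, x * b * y, h₂.bimodule _ hx _ hb _ hy,
      by rw [mul_add, add_mul]⟩

lemma isQRel_mulCl {V₁ V₂ : Set (H →L[ℂ] H)} (h₁ : IsQRel M V₁) (h₂ : IsQRel M V₂) :
    IsQRel M (mulCl V₁ V₂) := by
  apply isQRel_wclosure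
  · exact Submodule.zero_mem _
  · exact fun a ha b hb => Submodule.add_mem _ ha hb
  · exact fun c a ha => Submodule.smul_mem _ c ha
  · intro x hx v hv y hy
    induction hv using Submodule.span_induction with
    | mem w hw =>
      obtain ⟨a, ha, b, hb, rfl⟩ := hw
      apply Submodule.subset_span
      refine ⟨x * a * 1, h₁.bimodule _ hx _ ha _ (one_mem M.commutant),
        1 * b * y, h₂.bimodule _ (one_mem M.commutant) _ hb _ hy, ?_⟩
      simp [mul_assoc]
    | zero => simpa using Submodule.zero_mem _
    | add a b _ _ ha hb =>
      have : x * (a + b) * y = x * a * y + x * b * y := by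
        rw [mul_add, add_mul]
      rw [this]; exact Submodule.add_mem _ ha hb
    | smul c a _ ha =>
      have : x * (c • a) * y = c • (x * a * y) := by
        simp [mul_smul_comm, smul_mul_assoc]
      rw [this]; exact Submodule.smul_mem _ c ha

lemma subset_addCl_left {V₁ V₂ : Set (H →L[ℂ] H)} (h : (0 : H →L[ℂ] H) ∈ V₂) :
    V₁ ⊆ addCl V₁ V₂ := fun a ha =>
  wclosure_subset ⟨a, ha, 0, h, by simp⟩

lemma subset_addCl_right {V₁ V₂ : Set (H →L[ℂ] H)} (h : (0 : H →L[ℂ] H) ∈ V₁) :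
    V₂ ⊆ addCl V₁ V₂ := fun a ha =>
  wclosure_subset ⟨0, h, a, ha, by simp⟩

lemma addCl_subset {V₁ V₂ W : Set (H →L[ℂ] H)} (hW : IsQRel M W)
    (h₁ : V₁ ⊆ W) (h₂ : V₂ ⊆ W) : addCl V₁ V₂ ⊆ W := by
  apply wclosure_min _ hW.weakStarClosed
  rintro _ ⟨a, ha, b, hb, rfl⟩
  exact hW.add_mem _ _ (h₁ ha) (h₂ hb)

lemma mul_mem_mulCl {V₁ V₂ : Set (H →L[ℂ] H)} {a b : H →L[ℂ] H}
    (ha : a ∈ V₁) (hb : b ∈ V₂) : a * b ∈ mulCl V₁ V₂ :=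
  wclosure_subset (Submodule.subset_span ⟨a, ha, b, hb, rfl⟩)

lemma subset_mulCl_left {V₁ V₂ : Set (H →L[ℂ] H)} (h : (1 : H →L[ℂ] H) ∈ V₂) :
    V₁ ⊆ mulCl V₁ V₂ := fun a ha => by
  simpa using mul_mem_mulCl ha h

lemma subset_mulCl_right {V₁ V₂ : Set (H →L[ℂ] H)} (h : (1 : H →L[ℂ] H) ∈ V₁) :
    V₂ ⊆ mulCl V₁ V₂ := fun a ha => by
  simpa using mul_mem_mulCl h ha

lemma mulCl_subset {V₁ V₂ W : Set (H →L[ℂ] H)} (hW : IsQRel M W)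
    (h : ∀ a ∈ V₁, ∀ b ∈ V₂, a * b ∈ W) : mulCl V₁ V₂ ⊆ W := by
  apply wclosure_min _ hW.weakStarClosed
  intro v hv
  induction hv using Submodule.span_induction with
  | mem w hw => obtain ⟨a, ha, b, hb, rfl⟩ := hw; exact h a ha b hb
  | zero => exact hW.zero_mem
  | add a b _ _ ha hb => exact hW.add_mem _ _ ha hb
  | smul c a _ ha => exact hW.smul_mem _ _ ha

lemma subset_symCl {V : Set (H →L[ℂ] H)} (h0 : (0 : H →L[ℂ] H) ∈ V) : V ⊆ symCl V :=
  subset_addCl_left ⟨0, h0, star_zero _⟩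

lemma star_symCl_subset {V : Set (H →L[ℂ] H)} : star '' symCl V ⊆ symCl V := by
  refine (star_image_wclosure _).trans ?_
  apply wclosure_min _ (isWeakStarClosed_wclosure _)
  rintro _ ⟨_, ⟨a, ha, _, ⟨b, hb, rfl⟩, rfl⟩, rfl⟩
  exact wclosure_subset ⟨b, hb, star a, ⟨a, ha, rfl⟩, by rw [star_add, star_star, add_comm]⟩

lemma symCl_subset {V W : Set (H →L[ℂ] H)} (hW : IsQRel M W)
    (h : V ⊆ W) (hstar : star '' W ⊆ W) : symCl V ⊆ W :=
  addCl_subset hW h (fun _ ⟨a, ha, hrfl⟩ => hrfl ▸ hstar ⟨a, h ha, rfl⟩)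


lemma zero_mem_mulCl {V₁ V₂ : Set (H →L[ℂ] H)} : (0 : H →L[ℂ] H) ∈ mulCl V₁ V₂ :=
  wclosure_subset (Submodule.zero_mem _)

/-- The generating sequence of relations for the quantum metric. -/
def Egen (M : VonNeumannAlgebra H) (u : ℕ → Set (H →L[ℂ] H)) : ℕ → Set (H →L[ℂ] H)
  | 0 => (M.commutant : Set (H →L[ℂ] H))
  | n + 1 => symCl (mulCl (addCl (Egen M u n) (u n)) (addCl (Egen M u n) (u n)))

section Egen

variable {𝒱 : Set (Set (H →L[ℂ] H))} {u : ℕ → Set (H →L[ℂ] H)}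
variable (h𝒱 : IsQCoarse M 𝒱) (hu : ∀ n, u n ∈ 𝒱)

include h𝒱 hu

lemma Egen_mem : ∀ n, Egen M u n ∈ 𝒱 := by
  intro n
  induction n with
  | zero => exact h𝒱.diag_mem
  | succ n ih =>
    have hA : addCl (Egen M u n) (u n) ∈ 𝒱 := h𝒱.add_mem _ ih _ (hu n)
    have hP : mulCl (addCl (Egen M u n) (u n)) (addCl (Egen M u n) (u n)) ∈ 𝒱 :=
      h𝒱.mul_mem _ hA _ hA
    exact h𝒱.add_mem _ hP _ (h𝒱.star_mem _ hP)

lemma Egen_qrel (n : ℕ) : IsQRel M (Egen M u n) :=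
  h𝒱.qrel _ (Egen_mem h𝒱 hu n)

lemma one_mem_Egen : ∀ n, (1 : H →L[ℂ] H) ∈ Egen M u n := by
  intro n
  induction n with
  | zero => exact one_mem M.commutant
  | succ n ih =>
    have h1A : (1 : H →L[ℂ] H) ∈ addCl (Egen M u n) (u n) :=
      subset_addCl_left (h𝒱.qrel _ (hu n)).zero_mem ih
    exact subset_symCl zero_mem_mulCl (subset_mulCl_left h1A h1A)

lemma Egen_subset_succ (n : ℕ) : Egen M u n ⊆ Egen M u (n + 1) := by
  intro a ha
  have haA : a ∈ addCl (Egen M u n) (u n) :=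
    subset_addCl_left (h𝒱.qrel _ (hu n)).zero_mem ha
  have h1A : (1 : H →L[ℂ] H) ∈ addCl (Egen M u n) (u n) :=
    subset_addCl_left (h𝒱.qrel _ (hu n)).zero_mem (one_mem_Egen h𝒱 hu n)
  exact subset_symCl zero_mem_mulCl (subset_mulCl_left h1A haA)

lemma Egen_mono {n m : ℕ} (h : n ≤ m) : Egen M u n ⊆ Egen M u m := by
  induction m with
  | zero => rw [Nat.le_zero.mp h]
  | succ m ih =>
    rcases Nat.lt_or_ge n (m + 1) with h' | h'
    · exact (ih (Nat.lt_succ_iff.mp h')).trans (Egen_subset_succ h𝒱 hu m)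
    · rw [Nat.le_antisymm h h']

lemma u_subset_Egen (n : ℕ) : u n ⊆ Egen M u (n + 1) := by
  intro a ha
  have haA : a ∈ addCl (Egen M u n) (u n) :=
    subset_addCl_right (Egen_qrel h𝒱 hu n).zero_mem ha
  have h1A : (1 : H →L[ℂ] H) ∈ addCl (Egen M u n) (u n) :=
    subset_addCl_left (h𝒱.qrel _ (hu n)).zero_mem (one_mem_Egen h𝒱 hu n)
  exact subset_symCl zero_mem_mulCl (subset_mulCl_left h1A haA)

lemma star_Egen : ∀ n, star '' Egen M u n ⊆ Egen M u n := by
  intro n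
  cases n with
  | zero =>
    rintro _ ⟨a, ha, rfl⟩
    exact star_mem (s := M.commutant) ha
  | succ n => exact star_symCl_subset

lemma Egen_mul_succ {k : ℕ} {a b : H →L[ℂ] H}
    (ha : a ∈ Egen M u k) (hb : b ∈ Egen M u k) : a * b ∈ Egen M u (k + 1) := by
  have hA : ∀ c, c ∈ Egen M u k → c ∈ addCl (Egen M u k) (u k) := fun c hc =>
    subset_addCl_left (h𝒱.qrel _ (hu k)).zero_mem hc
  exact subset_symCl zero_mem_mulCl (mul_mem_mulCl (hA a ha) (hA b hb))

lemma Egen_mul {n m : ℕ} {a b : H →L[ℂ] H}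
    (ha : a ∈ Egen M u n) (hb : b ∈ Egen M u m) : a * b ∈ Egen M u (n + m) := by
  rcases Nat.eq_zero_or_pos n with rfl | hn
  · rw [Nat.zero_add]
    have := (Egen_qrel h𝒱 hu m).bimodule a ha b hb 1 (one_mem M.commutant)
    simpa using this
  rcases Nat.eq_zero_or_pos m with rfl | hm
  · have := (Egen_qrel h𝒱 hu n).bimodule 1 (one_mem M.commutant) a ha b hb
    simpa using this
  have hk : max n m + 1 ≤ n + m := by
    rcases Nat.le_total n m with h | h
    · rw [Nat.max_eq_right h]; omega
    · rw [Nat.max_eq_left h]; omega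
  exact Egen_mono h𝒱 hu hk
    (Egen_mul_succ h𝒱 hu (Egen_mono h𝒱 hu (Nat.le_max_left n m) ha)
      (Egen_mono h𝒱 hu (Nat.le_max_right n m) hb))

end Egen

/-- A quantum coarse structure is metrizable (generated by a quantum metric) if and only
if it is countably generated (it is the smallest quantum coarse structure containing some
countable family of quantum relations). -/
theorem statement3 (M : VonNeumannAlgebra H) (𝒱 : Set (Set (H →L[ℂ] H)))
    (h𝒱 : IsQCoarse M 𝒱) :
    (∃ V : ℝ≥0 → Set (H →L[ℂ] H), IsQMetric M V ∧
        𝒱 = {W : Set (H →L[ℂ] H) | IsQRel M W ∧ ∃ t : ℝ≥0, W ⊆ V t}) ↔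
    (∃ 𝒰 : Set (Set (H →L[ℂ] H)), 𝒰.Countable ∧ (∀ U ∈ 𝒰, IsQRel M U) ∧
        𝒰 ⊆ 𝒱 ∧
        ∀ 𝒲 : Set (Set (H →L[ℂ] H)), IsQCoarse M 𝒲 → 𝒰 ⊆ 𝒲 → 𝒱 ⊆ 𝒲) := by
  constructor
  · -- metrizable → countably generated
    rintro ⟨V, hV, hset⟩
    have qrelV : ∀ t : ℝ≥0, IsQRel M (V t) := by
      intro t
      refine ⟨hV.zero_mem t, hV.add_mem t, hV.smul_mem t, hV.weakStarClosed t, ?_⟩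
      intro x hx v hv y hy
      have hx' : x ∈ V 0 := by rw [hV.zero_eq]; exact hx
      have hy' : y ∈ V 0 := by rw [hV.zero_eq]; exact hy
      have h1 := hV.mul_mem 0 t x hx' v hv
      have h2 := hV.mul_mem (0 + t) 0 _ h1 y hy'
      simpa using h2
    have mono : ∀ {t s : ℝ≥0}, t ≤ s → V t ⊆ V s := by
      intro t s h a ha
      have := hV.mul_mem t (s - t) a ha 1 (hV.one_mem _)
      rwa [mul_one, add_tsub_cancel_of_le h] at this
    refine ⟨Set.range fun n : ℕ => V n, Set.countable_range _, ?_, ?_, ?_⟩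
    · rintro _ ⟨n, rfl⟩; exact qrelV n
    · rintro _ ⟨n, rfl⟩
      rw [hset]
      exact ⟨qrelV n, n, subset_rfl⟩
    · intro 𝒲 h𝒲 hsub W hW
      rw [hset] at hW
      obtain ⟨hq, t, hVt⟩ := hW
      exact h𝒲.subrel_mem (V (⌈t⌉₊ : ℝ≥0)) (hsub ⟨⌈t⌉₊, rfl⟩) W hq
        (hVt.trans (mono (Nat.le_ceil t)))
  · -- countably generated → metrizable
    rintro ⟨𝒰, hcount, hqrel, hsub𝒱, hmin⟩
    obtain ⟨u, hu_eq⟩ :=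
      (hcount.insert (M.commutant : Set (H →L[ℂ] H))).exists_eq_range
        (Set.insert_nonempty _ _)
    have hu : ∀ n, u n ∈ 𝒱 := by
      intro n
      have : u n ∈ insert (M.commutant : Set (H →L[ℂ] H)) 𝒰 := by
        rw [hu_eq]; exact Set.mem_range_self n
      rcases this with h | h
      · rw [h]; exact h𝒱.diag_mem
      · exact hsub𝒱 h
    refine ⟨fun t => Egen M u ⌊t⌋₊, ?_, ?_⟩
    · refine ⟨fun t => (Egen_qrel h𝒱 hu _).zero_mem, fun t => (Egen_qrel h𝒱 hu _).add_mem,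
        fun t => (Egen_qrel h𝒱 hu _).smul_mem, fun t => one_mem_Egen h𝒱 hu _,
        fun t a ha => star_Egen h𝒱 hu _ ⟨a, ha, rfl⟩,
        fun t => (Egen_qrel h𝒱 hu _).weakStarClosed, ?_, ?_, ?_⟩
      · show Egen M u ⌊(0:ℝ≥0)⌋₊ = _
        rw [Nat.floor_zero]
        rfl
      · intro t s a ha b hb
        have h1 := Egen_mul h𝒱 hu ha hb
        have hle : ⌊t⌋₊ + ⌊s⌋₊ ≤ ⌊t + s⌋₊ := by
          apply Nat.le_floor
          push_cast
          exact add_le_add (Nat.floor_le (zero_le : 0 ≤ t)) (Nat.floor_le (zero_le : 0 ≤ s))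
        exact Egen_mono h𝒱 hu hle h1
      · intro t
        apply Set.Subset.antisymm
        · intro x hx
          simp only [Set.mem_iInter]
          intro s hs
          exact Egen_mono h𝒱 hu (Nat.floor_le_floor hs.le) hx
        · intro x hx
          simp only [Set.mem_iInter] at hx
          have ht1 : t < ((⌊t⌋₊ + 1 : ℕ) : ℝ≥0) := by
            exact_mod_cast Nat.lt_floor_add_one t
          obtain ⟨s₀, hts₀, hs₀⟩ := exists_between ht1
          have hfl : ⌊s₀⌋₊ = ⌊t⌋₊ := by
            have h2 : ⌊s₀⌋₊ < ⌊t⌋₊ + 1 := (Nat.floor_lt zero_le).2 hs₀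
            have h3 : ⌊t⌋₊ ≤ ⌊s₀⌋₊ := Nat.floor_le_floor hts₀.le
            omega
          have := hx s₀ hts₀
          rwa [hfl] at this
    · ext W
      constructor
      · intro hW
        refine ⟨h𝒱.qrel _ hW, ?_⟩
        set 𝒲 : Set (Set (H →L[ℂ] H)) :=
          {W | IsQRel M W ∧ ∃ n : ℕ, W ⊆ Egen M u n} with h𝒲def
        have h𝒲 : IsQCoarse M 𝒲 := by
          refine ⟨fun V hV => hV.1, ⟨h𝒱.qrel _ h𝒱.diag_mem, 0, subset_rfl⟩,
            fun V₁ hV₁ V₂ hq hsub => ⟨hq, hV₁.2.choose, hsub.trans hV₁.2.choose_spec⟩,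
            ?_, ?_, ?_⟩
          · rintro V₂ ⟨hq, n, hn⟩
            exact ⟨isQRel_star hq, n, (Set.image_mono hn).trans (star_Egen h𝒱 hu n)⟩
          · rintro V₁ ⟨hq1, n, hn⟩ V₂ ⟨hq2, m, hm⟩
            refine ⟨isQRel_addCl hq1 hq2, n + m, ?_⟩
            exact addCl_subset (Egen_qrel h𝒱 hu (n + m))
              (hn.trans (Egen_mono h𝒱 hu (Nat.le_add_right n m)))
              (hm.trans (Egen_mono h𝒱 hu (Nat.le_add_left m n)))
          · rintro V₁ ⟨hq1, n, hn⟩ V₂ ⟨hq2, m, hm⟩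
            refine ⟨isQRel_mulCl hq1 hq2, n + m, ?_⟩
            exact mulCl_subset (Egen_qrel h𝒱 hu (n + m))
              (fun a ha b hb => Egen_mul h𝒱 hu (hn ha) (hm hb))
        have hsub𝒲 : 𝒰 ⊆ 𝒲 := by
          intro U hU
          have hU' : U ∈ insert (M.commutant : Set (H →L[ℂ] H)) 𝒰 :=
            Set.mem_insert_of_mem _ hU
          rw [hu_eq] at hU'
          obtain ⟨k, hk⟩ := hU'
          exact ⟨hqrel _ hU, k + 1, hk ▸ u_subset_Egen h𝒱 hu k⟩
        obtain ⟨hq, n, hn⟩ := hmin 𝒲 h𝒲 hsub𝒲 hW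
        refine ⟨(n : ℝ≥0), ?_⟩
        show W ⊆ Egen M u ⌊(n : ℝ≥0)⌋₊
        rw [Nat.floor_natCast]
        exact hn
      · rintro ⟨hq, t, hVt⟩
        exact h𝒱.subrel_mem _ (Egen_mem h𝒱 hu ⌊t⌋₊) W hq hVt

end
end QCG
end
end

section
/- Let H = M₂(ℂ) equipped with the Hilbert–Schmidt inner product ⟨ξ,η⟩ = Tr(η*ξ), let M ⊆ B(H) be the von Neumann algebra of left multiplication operators L_b : ξ ↦ bξ for b ∈ M₂(ℂ), and define τ on the projections of M by τ(L_p) = Tr(p) (the unnormalized trace). Let a ∈ B(H) be the transpose map ξ ↦ ξᵗ. Then: (1) a is self-adjoint; (2) τ(s^M(aξ)) = τ(s^M(ξ)) for every ξ ∈ H, so a is 1-vector-constrained (τ(s^M(aξ)) ≤ 1·τ(s^M(ξ)) and likewise for a* = a); but (3) for the projection q = L_{e₁₁} ∈ M one has s_ℓ^M(aq) = 1_H, hence τ(s_ℓ^M(aq)) = 2 = 2·τ(q), so a is not 1-constrained, i.e., the inequality τ(s_ℓ^M(aq)) ≤ 1·τ(q) fails. -/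
/-!
A projection of `M` is `L_p` with `p` a Hermitian idempotent, and `L_p ξ = ξ` says that the range
of `p` contains the column space of `ξ`. Hence `τ(s^M(ξ))` is the rank of `ξ` (`0`, `1` or `2`
according as `ξ` is zero, nonzero singular or invertible; in the singular case the support is
`ξ ξᴴ / Tr (ξ ξᴴ)`), and transposition preserves rank. On the other hand the range of `a L_{e₁₁}`
contains `e₁₁` and `e₂₁`, whose columns span `ℂ²`, so the only projection of `M` fixing it is `1`.
-/

open Matrix

noncomputable section

namespace QCG12

/-- The 4-dimensional Hilbert space `H = M₂(ℂ)` (with the Hilbert–Schmidt inner product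
`⟨ξ, η⟩ = Tr(η* ξ)` encoded by `hsInner` below). -/
abbrev HS2 : Type := Matrix (Fin 2) (Fin 2) ℂ

/-- The Hilbert–Schmidt inner product `⟨ξ, η⟩ = Tr(η* ξ)`. -/
def hsInner (ξ η : HS2) : ℂ := (ηᴴ * ξ).trace

/-- Left multiplication `L_b : ξ ↦ b ξ`. -/
def Lmul (b : HS2) : HS2 →ₗ[ℂ] HS2 := LinearMap.mulLeft ℂ b

/-- The von Neumann algebra `M` of left multiplication operators. -/
def Mset : Set (HS2 →ₗ[ℂ] HS2) := Set.range Lmul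

/-- An orthogonal projection belonging to `M`: an idempotent, self-adjoint (w.r.t. the
Hilbert–Schmidt inner product) left multiplication operator. -/
def IsProjInM (P : HS2 →ₗ[ℂ] HS2) : Prop :=
  P ∈ Mset ∧ P ∘ₗ P = P ∧ ∀ ξ η : HS2, hsInner (P ξ) η = hsInner ξ (P η)

/-- `s` is the `M`-support of `ξ`: the smallest projection in `M` fixing `ξ`. -/
def IsVecSupp (ξ : HS2) (s : HS2 →ₗ[ℂ] HS2) : Prop :=
  IsProjInM s ∧ s ξ = ξ ∧
    ∀ p : HS2 →ₗ[ℂ] HS2, IsProjInM p → p ξ = ξ → p ∘ₗ s = s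

/-- `s` is the left `M`-support of `a`: the smallest projection `q ∈ M` with `q a = a`. -/
def IsLeftSupp (a s : HS2 →ₗ[ℂ] HS2) : Prop :=
  IsProjInM s ∧ s ∘ₗ a = a ∧
    ∀ p : HS2 →ₗ[ℂ] HS2, IsProjInM p → p ∘ₗ a = a → p ∘ₗ s = s

/-- The trace `τ(L_p) = Tr(p)` on `M` (evaluated via `P ↦ Re Tr (P 1)`). -/
def tauM (P : HS2 →ₗ[ℂ] HS2) : ℝ := ((P 1).trace).re

/-- The transpose operator `a : ξ ↦ ξᵗ` on `HS2`. -/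
def Ttr : HS2 →ₗ[ℂ] HS2 :=
  { toFun := fun ξ => ξᵀ
    map_add' := fun ξ η => Matrix.transpose_add ξ η
    map_smul' := fun c ξ => Matrix.transpose_smul c ξ }

/-- The matrix unit `e₁₁ ∈ M₂(ℂ)`. -/
def e11 : HS2 := Matrix.single (0 : Fin 2) (0 : Fin 2) (1 : ℂ)

end QCG12

namespace Matrix

variable {n R : Type*} [Fintype n]

lemma trace_conjTranspose_mul_transpose [CommSemiring R] [StarRing R] (ξ η : Matrix n n R) :
    (ηᴴ * ξᵀ).trace = (ηᵀᴴ * ξ).trace := by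
  rw [← trace_transpose, transpose_mul, transpose_transpose, trace_mul_comm,
    conjTranspose_transpose_eq_transpose_conjTranspose]

lemma eq_one_of_mul_single_eq [DecidableEq n] [Semiring R] {b : Matrix n n R} (j : n)
    (h : ∀ i, b * single i j 1 = single i j 1) : b = 1 := by
  ext k i
  simpa [one_apply, single_apply, eq_comm] using congr_fun (congr_fun (h i) k) j

/-- Over a field a singular `ξ` is `u vᵀ`, and both sides are `(uᴴ u)(vᴴ v) ξ`. -/
lemma mul_conjTranspose_mul_of_det_eq_zero [CommRing R] [StarRing R]
    {ξ : Matrix (Fin 2) (Fin 2) R} (hdet : ξ.det = 0) :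
    ξ * ξᴴ * ξ = (ξ * ξᴴ).trace • ξ := by
  rw [det_fin_two] at hdet
  ext i j
  fin_cases i <;> fin_cases j <;>
    simp only [mul_apply, trace, diag, conjTranspose_apply, Fin.sum_univ_two, smul_apply,
      smul_eq_mul, Fin.zero_eta, Fin.mk_one, Fin.isValue]
  · linear_combination (-star (ξ 1 1)) * hdet
  · linear_combination star (ξ 1 0) * hdet
  · linear_combination star (ξ 0 1) * hdet
  · linear_combination (-star (ξ 0 0)) * hdet

end Matrix

namespace QCG12

open scoped ComplexOrder

lemma lmul_apply (b ξ : HS2) : Lmul b ξ = b * ξ := rfl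

lemma Ttr_apply (ξ : HS2) : Ttr ξ = ξᵀ := rfl

lemma lmul_comp_lmul (b c : HS2) : Lmul b ∘ₗ Lmul c = Lmul (b * c) :=
  (LinearMap.mulLeft_mul ℂ HS2 b c).symm

lemma lmul_injective : Function.Injective Lmul := fun b c h => by
  simpa [lmul_apply] using LinearMap.congr_fun h 1

lemma lmul_one : Lmul 1 = LinearMap.id := LinearMap.mulLeft_one ℂ HS2

lemma tauM_lmul (b : HS2) : tauM (Lmul b) = b.trace.re := by
  simp [tauM, lmul_apply]

lemma hsInner_self_eq_zero_iff {ξ : HS2} : hsInner ξ ξ = 0 ↔ ξ = 0 :=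
  trace_conjTranspose_mul_self_eq_zero_iff

lemma hsInner_lmul_left (b ξ η : HS2) : hsInner (Lmul b ξ) η = hsInner ξ (Lmul bᴴ η) := by
  simp only [hsInner, lmul_apply, conjTranspose_mul, conjTranspose_conjTranspose, Matrix.mul_assoc]

lemma hsInner_lmul_right (b ξ η : HS2) : hsInner ξ (Lmul b η) = hsInner (Lmul bᴴ ξ) η := by
  rw [hsInner_lmul_left, conjTranspose_conjTranspose]

lemma isProjInM_lmul_iff {b : HS2} : IsProjInM (Lmul b) ↔ IsIdempotentElem b ∧ b.IsHermitian := by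
  refine ⟨fun ⟨_, hidem, hsa⟩ => ⟨?_, ?_⟩, fun ⟨hidem, hherm⟩ => ⟨⟨b, rfl⟩, ?_, ?_⟩⟩
  · exact lmul_injective (by rw [← lmul_comp_lmul, hidem])
  · -- Self-adjointness tested against `ξ = 1` gives `⟨b, η⟩ = ⟨bᴴ, η⟩` for every `η`.
    have hcoef : ∀ η, hsInner (bᴴ - b) η = 0 := fun η => by
      have h := hsa 1 η
      rw [hsInner_lmul_right, lmul_apply, lmul_apply, mul_one, mul_one] at h
      rw [hsInner, Matrix.mul_sub, trace_sub, ← hsInner, ← hsInner, h, sub_self]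
    exact sub_eq_zero.mp (hsInner_self_eq_zero_iff.mp (hcoef _))
  · rw [lmul_comp_lmul, hidem.eq]
  · intro ξ η
    rw [hsInner_lmul_left, hherm.eq]

lemma IsProjInM.exists_eq_lmul {P : HS2 →ₗ[ℂ] HS2} (hP : IsProjInM P) :
    ∃ b : HS2, P = Lmul b ∧ IsIdempotentElem b ∧ b.IsHermitian := by
  obtain ⟨b, rfl⟩ := hP.1
  exact ⟨b, rfl, isProjInM_lmul_iff.mp hP⟩

lemma IsVecSupp.unique {ξ : HS2} {s s' : HS2 →ₗ[ℂ] HS2}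
    (h : IsVecSupp ξ s) (h' : IsVecSupp ξ s') : s = s' := by
  obtain ⟨b, rfl, -, hb⟩ := h.1.exists_eq_lmul
  obtain ⟨b', rfl, -, hb'⟩ := h'.1.exists_eq_lmul
  have h₁ : b' * b = b := lmul_injective (by rw [← lmul_comp_lmul]; exact h.2.2 _ h'.1 h'.2.1)
  have h₂ : b * b' = b' := lmul_injective (by rw [← lmul_comp_lmul]; exact h'.2.2 _ h.1 h.2.1)
  have h₃ : b * b' = b := by
    simpa only [conjTranspose_mul, hb.eq, hb'.eq] using congr_arg conjTranspose h₁
  rw [← h₂, h₃]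

lemma isVecSupp_lmul {ξ b : HS2} (hidem : IsIdempotentElem b) (hherm : b.IsHermitian)
    (hb : b * ξ = ξ) (hmin : ∀ q : HS2, q * ξ = ξ → q * b = b) : IsVecSupp ξ (Lmul b) := by
  refine ⟨isProjInM_lmul_iff.mpr ⟨hidem, hherm⟩, hb, fun p hp hpξ => ?_⟩
  obtain ⟨q, rfl, -⟩ := hp.exists_eq_lmul
  rw [lmul_comp_lmul, hmin q hpξ]

lemma isVecSupp_zero : IsVecSupp 0 (Lmul 0) :=
  isVecSupp_lmul IsIdempotentElem.zero isHermitian_zero (zero_mul 0) fun _ _ => mul_zero _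

lemma isVecSupp_of_det_ne_zero {ξ : HS2} (hdet : ξ.det ≠ 0) : IsVecSupp ξ (Lmul 1) := by
  refine isVecSupp_lmul IsIdempotentElem.one isHermitian_one (one_mul ξ) fun q hq => ?_
  have hinv : ξ * ξ⁻¹ = 1 := mul_nonsing_inv ξ (isUnit_iff_ne_zero.mpr hdet)
  calc q * 1 = q * ξ * ξ⁻¹ := by rw [Matrix.mul_assoc, hinv]
    _ = 1 := by rw [hq, hinv]

lemma isVecSupp_of_det_eq_zero {ξ : HS2} (hξ : ξ ≠ 0) (hdet : ξ.det = 0) :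
    IsVecSupp ξ (Lmul ((ξ * ξᴴ).trace⁻¹ • (ξ * ξᴴ))) := by
  have ht : (ξ * ξᴴ).trace ≠ 0 := mt trace_mul_conjTranspose_self_eq_zero_iff.mp hξ
  have hkey := mul_conjTranspose_mul_of_det_eq_zero hdet
  have hstar : star (ξ * ξᴴ).trace = (ξ * ξᴴ).trace := by
    rw [← trace_conjTranspose, conjTranspose_mul, conjTranspose_conjTranspose]
  refine isVecSupp_lmul ?_ ?_ ?_ fun q hq => ?_
  · rw [IsIdempotentElem, smul_mul_smul, ← Matrix.mul_assoc, hkey, smul_mul, smul_smul,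
      inv_mul_cancel_right₀ ht]
  · rw [IsHermitian, conjTranspose_smul, star_inv₀, hstar,
      (isHermitian_mul_conjTranspose_self ξ).eq]
  · rw [smul_mul, hkey, smul_smul, inv_mul_cancel₀ ht, one_smul]
  · rw [Matrix.mul_smul, ← Matrix.mul_assoc, hq]

lemma IsVecSupp.tauM_eq {ξ : HS2} {s : HS2 →ₗ[ℂ] HS2} (hs : IsVecSupp ξ s) :
    tauM s = if ξ = 0 then 0 else if ξ.det = 0 then 1 else 2 := by
  split_ifs with hξ hdet
  · subst hξ
    simp [hs.unique isVecSupp_zero, tauM_lmul]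
  · have ht : (ξ * ξᴴ).trace ≠ 0 := mt trace_mul_conjTranspose_self_eq_zero_iff.mp hξ
    simp [hs.unique (isVecSupp_of_det_eq_zero hξ hdet), tauM_lmul, trace_smul, ht]
  · simp [hs.unique (isVecSupp_of_det_ne_zero hdet), tauM_lmul]

lemma isProjInM_lmul_e11 : IsProjInM (Lmul e11) :=
  isProjInM_lmul_iff.mpr
    ⟨by simp [IsIdempotentElem, e11], by simp [IsHermitian, e11, conjTranspose_single]⟩

lemma tauM_lmul_e11 : tauM (Lmul e11) = 1 := by
  simp [tauM_lmul, e11]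

/-- `e₁₁ = (e₁₁ · 1)ᵗ` and `e₂₁ = (e₁₁ e₁₂)ᵗ` lie in the range of `a L_{e₁₁}`. -/
lemma eq_id_of_comp_Ttr_lmul_e11 {s : HS2 →ₗ[ℂ] HS2} (hs : IsProjInM s)
    (h : s ∘ₗ (Ttr ∘ₗ Lmul e11) = Ttr ∘ₗ Lmul e11) : s = LinearMap.id := by
  obtain ⟨b, rfl, -⟩ := hs.exists_eq_lmul
  rw [← lmul_one]
  congr 1
  refine eq_one_of_mul_single_eq 0 fun i => ?_
  fin_cases i
  · simpa [lmul_apply, Ttr_apply, e11, transpose_single] using LinearMap.congr_fun h 1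
  · simpa [lmul_apply, Ttr_apply, e11, transpose_single] using
      LinearMap.congr_fun h (single 0 1 1)

/-- The transpose map `a` on `M₂(ℂ)` with the Hilbert–Schmidt inner product is
self-adjoint and vector-support preserving (`τ(s^M(aξ)) = τ(s^M(ξ))`, so `a` is
`1`-vector-constrained), yet for the projection `q = L_{e₁₁}` the left support of `a q`
is `1_H`, so `τ(s_ℓ^M(aq)) = 2 = 2·τ(q) > 1·τ(q)` and `a` is not `1`-constrained. -/
theorem statement12 :
    (∀ ξ η : HS2, hsInner (Ttr ξ) η = hsInner ξ (Ttr η)) ∧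
    (∀ (ξ : HS2) (s t : HS2 →ₗ[ℂ] HS2),
      IsVecSupp ξ s → IsVecSupp (Ttr ξ) t → tauM t = tauM s) ∧
    (IsProjInM (Lmul e11) ∧ tauM (Lmul e11) = 1 ∧
      ∀ s : HS2 →ₗ[ℂ] HS2, IsLeftSupp (Ttr ∘ₗ Lmul e11) s →
        s = LinearMap.id ∧ tauM s = 2 ∧ ¬ tauM s ≤ 1 * tauM (Lmul e11)) := by
  refine ⟨trace_conjTranspose_mul_transpose, ?_, isProjInM_lmul_e11,
    tauM_lmul_e11, fun s hs => ?_⟩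
  · intro ξ s t hs ht
    simp only [hs.tauM_eq, ht.tauM_eq, Ttr_apply, transpose_eq_zero, det_transpose]
  · have hid := eq_id_of_comp_Ttr_lmul_e11 hs.1 hs.2.1
    have htau : tauM s = 2 := by
      rw [hid, ← lmul_one, tauM_lmul, trace_one]
      norm_num
    refine ⟨hid, htau, ?_⟩
    rw [htau, tauM_lmul_e11]
    norm_num

end QCG12
end
end

section
/- Let M ⊆ B(H) be an abelian von Neumann algebra and let ξ₁, …, ξ_n ∈ H. Then there exist real numbers c₁ = 1, c₂, …, c_n such that ⋁_{j=1}^n s^M(ξ_j) = s^M(∑_{j=1}^n c_j ξ_j). -/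
open scoped ENNReal NNReal

noncomputable section

universe u

namespace QCG

variable {H : Type u} [NormedAddCommGroup H] [InnerProductSpace ℂ H] [CompleteSpace H]

/-! ### Auxiliary material: construction of vector supports -/

section SupportConstruction

variable (M : VonNeumannAlgebra H)

/-- The orbit `M' ξ` of a vector under the commutant, as a submodule. -/
def orbit (ξ : H) : Submodule ℂ H where
  carrier := {y | ∃ u ∈ M.commutant, u ξ = y}
  add_mem' := by
    rintro a b ⟨u, hu, rfl⟩ ⟨v, hv, rfl⟩
    exact ⟨u + v, add_mem hu hv, by simp⟩
  zero_mem' := ⟨0, zero_mem M.commutant.toStarSubalgebra, by simp⟩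
  smul_mem' := by
    rintro c a ⟨u, hu, rfl⟩
    refine ⟨c • u, ?_, by simp⟩
    rw [VonNeumannAlgebra.mem_commutant_iff] at hu ⊢
    intro g hg
    rw [mul_smul_comm, smul_mul_assoc, hu g hg]

/-- The closed subspace `[M' ξ]`. -/
def suppSp (ξ : H) : Submodule ℂ H := (orbit M ξ).topologicalClosure

instance (ξ : H) : CompleteSpace (suppSp M ξ) :=
  (orbit M ξ).isClosed_topologicalClosure.completeSpace_coe

/-- The `M`-support of a vector `ξ`: the orthogonal projection onto `[M' ξ]`. -/
def suppP (ξ : H) : H →L[ℂ] H :=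
  (suppSp M ξ).subtypeL ∘L Submodule.orthogonalProjectionOnto (suppSp M ξ)

variable {M}

lemma suppP_apply_mem (ξ x : H) : suppP M ξ x ∈ suppSp M ξ := by
  exact ((Submodule.orthogonalProjectionOnto (suppSp M ξ)) x).2

lemma suppP_fix {ξ x : H} (hx : x ∈ suppSp M ξ) : suppP M ξ x = x := by
  exact Submodule.starProjection_eq_self_iff.2 hx

lemma mem_suppSp_self (ξ : H) : ξ ∈ suppSp M ξ :=
  (orbit M ξ).le_topologicalClosure ⟨1, one_mem M.commutant.toStarSubalgebra, by simp⟩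

lemma suppP_apply_self (ξ : H) : suppP M ξ ξ = ξ := suppP_fix (mem_suppSp_self ξ)

lemma suppP_idem (ξ : H) : IsIdempotentElem (suppP M ξ) := by
  refine ContinuousLinearMap.ext fun x => ?_
  show suppP M ξ (suppP M ξ x) = suppP M ξ x
  exact suppP_fix (suppP_apply_mem ξ x)

lemma suppP_selfAdjoint (ξ : H) : IsSelfAdjoint (suppP M ξ) :=
  isSelfAdjoint_starProjection (suppSp M ξ)

lemma commutant_maps_suppSp {ξ : H} {u : H →L[ℂ] H} (hu : u ∈ M.commutant) {x : H}
    (hx : x ∈ suppSp M ξ) : u x ∈ suppSp M ξ := by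
  have hco : (suppSp M ξ : Set H) = closure (orbit M ξ : Set H) :=
    (orbit M ξ).topologicalClosure_coe
  have hx' : x ∈ closure (orbit M ξ : Set H) := by
    rw [← hco]; exact hx
  have hux : u x ∈ closure (orbit M ξ : Set H) := by
    refine map_mem_closure u.continuous hx' ?_
    rintro y ⟨v, hv, rfl⟩
    exact ⟨u * v, mul_mem hu hv, by simp⟩
  show u x ∈ (suppSp M ξ : Set H)
  rw [hco]; exact hux

lemma suppP_mem (ξ : H) : suppP M ξ ∈ M := by
  have key : ∀ u ∈ M.commutant, u * suppP M ξ = suppP M ξ * u := by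
    intro u hu
    refine ContinuousLinearMap.ext fun x => ?_
    have hdecomp : x = suppP M ξ x + (x - suppP M ξ x) := by abel
    have h1 : u (suppP M ξ x) ∈ suppSp M ξ :=
      commutant_maps_suppSp hu (suppP_apply_mem ξ x)
    have h2 : x - suppP M ξ x ∈ (suppSp M ξ)ᗮ :=
      Submodule.sub_starProjection_mem_orthogonal (K := suppSp M ξ) x
    have h3 : u (x - suppP M ξ x) ∈ (suppSp M ξ)ᗮ := by
      rw [Submodule.mem_orthogonal']
      intro w hw
      have hadj : (ContinuousLinearMap.adjoint u) w ∈ suppSp M ξ := by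
        rw [← ContinuousLinearMap.star_eq_adjoint]
        exact commutant_maps_suppSp (star_mem hu) hw
      rw [← ContinuousLinearMap.adjoint_inner_right]
      exact (Submodule.mem_orthogonal' _ _).1 h2 _ hadj
    have hPu1 : suppP M ξ (u (suppP M ξ x)) = u (suppP M ξ x) := suppP_fix h1
    have hPu2 : suppP M ξ (u (x - suppP M ξ x)) = 0 := by
      have h0 := Submodule.orthogonalProjectionOnto_apply_of_mem_orthogonal h3
      show ((Submodule.orthogonalProjectionOnto (suppSp M ξ)) (u (x - suppP M ξ x)) : H) = 0
      rw [h0]; rfl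
    show u (suppP M ξ x) = suppP M ξ (u x)
    conv_rhs => rw [hdecomp]
    rw [map_add, map_add, hPu1, hPu2, add_zero]
  have : suppP M ξ ∈ Set.centralizer (Set.centralizer (M : Set (H →L[ℂ] H))) := by
    intro u hu
    exact key u (by rwa [VonNeumannAlgebra.mem_commutant_iff])
  rwa [M.centralizer_centralizer] at this

lemma suppP_min {ξ : H} {p : H →L[ℂ] H} (hp : IsProjectionIn M p) (hfix : p ξ = ξ) :
    p * suppP M ξ = suppP M ξ := by
  refine ContinuousLinearMap.ext fun x => ?_
  show p (suppP M ξ x) = suppP M ξ x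
  have hx := suppP_apply_mem (M := M) ξ x
  -- p fixes every element of suppSp M ξ
  have horb : ∀ y ∈ orbit M ξ, p y = y := by
    rintro y ⟨v, hv, rfl⟩
    rw [VonNeumannAlgebra.mem_commutant_iff] at hv
    have : p (v ξ) = v (p ξ) := by
      have := hv p hp.1
      calc p (v ξ) = (p * v) ξ := rfl
        _ = (v * p) ξ := by rw [this]
        _ = v (p ξ) := rfl
    rw [this, hfix]
  have hclosed : IsClosed {y : H | p y = y} :=
    isClosed_eq p.continuous continuous_id
  have : (suppSp M ξ : Set H) ⊆ {y : H | p y = y} := by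
    have hco : (suppSp M ξ : Set H) = closure (orbit M ξ : Set H) :=
      (orbit M ξ).topologicalClosure_coe
    rw [hco]
    exact closure_minimal horb hclosed
  exact this hx

lemma suppP_isVectorSupport (ξ : H) : IsVectorSupport M ξ (suppP M ξ) :=
  ⟨⟨suppP_mem ξ, suppP_idem ξ, suppP_selfAdjoint ξ⟩, suppP_apply_self ξ,
    fun _ hp hfix => suppP_min hp hfix⟩

end SupportConstruction

section GoodCoefficient

variable {M : VonNeumannAlgebra H}

lemma one_sub_suppP_apply (ζ : H) (x : H) :
    ((1 : H →L[ℂ] H) - suppP M ζ) x = x - suppP M ζ x := rfl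

lemma one_sub_suppP_vanish (ζ : H) : ((1 : H →L[ℂ] H) - suppP M ζ) ζ = 0 := by
  rw [one_sub_suppP_apply, suppP_apply_self, sub_self]

/-- For distinct coefficients `c ≠ c'`, the defect vectors `η - s(η + cξ) η` are orthogonal
(in an abelian von Neumann algebra). -/
lemma defect_orthogonal (habel : ∀ x ∈ M, ∀ y ∈ M, x * y = y * x) (η ξ : H)
    {c c' : ℝ} (hne : c ≠ c') :
    (inner ℂ (η - suppP M (η + (c : ℂ) • ξ) η) (η - suppP M (η + (c' : ℂ) • ξ) η) : ℂ) = 0 := by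
  set P := suppP M (η + (c : ℂ) • ξ) with hP
  set Q := suppP M (η + (c' : ℂ) • ξ) with hQ
  set A := (1 : H →L[ℂ] H) - P with hA
  set B := (1 : H →L[ℂ] H) - Q with hB
  have hPQ : P * Q = Q * P := habel P (suppP_mem _) Q (suppP_mem _)
  have hABop : B * A = A * B := by
    simp only [hA, hB, sub_mul, mul_sub, one_mul, mul_one, hPQ]
    abel
  have hBsa : IsSelfAdjoint B := (IsSelfAdjoint.one (R := H →L[ℂ] H)).sub (suppP_selfAdjoint _)
  have hAz : A (η + (c : ℂ) • ξ) = 0 := one_sub_suppP_vanish _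
  have hBz : B (η + (c' : ℂ) • ξ) = 0 := one_sub_suppP_vanish _
  have h1 : B (A η) + (c : ℂ) • B (A ξ) = 0 := by
    have : B (A (η + (c : ℂ) • ξ)) = 0 := by rw [hAz, map_zero]
    simpa [map_add, map_smul] using this
  have h2 : B (A η) + (c' : ℂ) • B (A ξ) = 0 := by
    have : (B * A) (η + (c' : ℂ) • ξ) = 0 := by
      rw [hABop, ContinuousLinearMap.mul_apply, hBz, map_zero]
    have h2' : B (A (η + (c' : ℂ) • ξ)) = 0 := this
    simpa [map_add, map_smul] using h2'
  have hξ : B (A ξ) = 0 := by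
    have hsub : ((c : ℂ) - (c' : ℂ)) • B (A ξ) = 0 := by
      have := sub_eq_zero.2 (h1.trans h2.symm)
      rw [add_sub_add_left_eq_sub, ← sub_smul] at this
      exact this
    have hcc : ((c : ℂ) - (c' : ℂ)) ≠ 0 := by
      rw [sub_ne_zero]
      exact_mod_cast fun h => hne (Complex.ofReal_injective h)
    exact (smul_eq_zero.1 hsub).resolve_left hcc
  have hη : B (A η) = 0 := by
    have := h1
    rw [hξ, smul_zero, add_zero] at this
    exact this
  have hsym := hBsa.isSymmetric (A η) η
  calc (inner ℂ (A η) (B η) : ℂ) = inner ℂ (B (A η)) η := (hBsa.isSymmetric (A η) η).symm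
    _ = 0 := by rw [hη, inner_zero_left]

lemma defect_inner_self (ζ η : H) :
    (inner ℂ (η - suppP M ζ η) η : ℂ) = (‖η - suppP M ζ η‖ : ℂ) ^ 2 := by
  have hmem : suppP M ζ η ∈ suppSp M ζ := suppP_apply_mem ζ η
  have horth : η - suppP M ζ η ∈ (suppSp M ζ)ᗮ :=
    Submodule.sub_starProjection_mem_orthogonal (K := suppSp M ζ) η
  have : (inner ℂ (η - suppP M ζ η) (suppP M ζ η) : ℂ) = 0 :=
    (Submodule.mem_orthogonal' _ _).1 horth _ hmem
  calc (inner ℂ (η - suppP M ζ η) η : ℂ)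
      = inner ℂ (η - suppP M ζ η) ((η - suppP M ζ η) + suppP M ζ η) := by
        rw [sub_add_cancel]
    _ = inner ℂ (η - suppP M ζ η) (η - suppP M ζ η) + inner ℂ (η - suppP M ζ η) (suppP M ζ η) := by
        rw [inner_add_right]
    _ = (‖η - suppP M ζ η‖ : ℂ) ^ 2 := by
        rw [this, add_zero, inner_self_eq_norm_sq_to_K]
        norm_cast

/-- There is a nonzero real `c` such that the support of `η + c ξ` fixes `η`. -/
lemma exists_good (habel : ∀ x ∈ M, ∀ y ∈ M, x * y = y * x) (η ξ : H) :
    ∃ c : ℝ, c ≠ 0 ∧ suppP M (η + (c : ℂ) • ξ) η = η := by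
  classical
  set g : ℝ → H := fun c => η - suppP M (η + (c : ℂ) • ξ) η with hg
  set f : ℝ → ℝ := fun c => if c = 0 then 0 else ‖g c‖ ^ 2 with hf
  have hf0 : 0 ≤ f := by
    intro c
    simp only [hf]
    split <;> positivity
  have hsum_le : ∀ F : Finset ℝ, ∑ c ∈ F, f c ≤ ‖η‖ ^ 2 := by
    intro F
    set F' := F.erase 0 with hF'
    have hstep : ∑ c ∈ F, f c = ∑ c ∈ F', ‖g c‖ ^ 2 := by
      rw [hF', ← Finset.sum_erase F (show f 0 = 0 by simp [hf])]
      refine Finset.sum_congr rfl fun c hc => ?_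
      have : c ≠ 0 := (Finset.mem_erase.1 hc).1
      simp [hf, this]
    set v : H := ∑ c ∈ F', g c with hv
    have hinner : (inner ℂ v η : ℂ) = ((∑ c ∈ F', ‖g c‖ ^ 2 : ℝ) : ℂ) := by
      rw [hv, sum_inner]
      push_cast
      refine Finset.sum_congr rfl fun c _ => ?_
      exact defect_inner_self _ _
    have hvv : (inner ℂ v v : ℂ) = ((∑ c ∈ F', ‖g c‖ ^ 2 : ℝ) : ℂ) := by
      rw [hv, sum_inner]
      push_cast
      refine Finset.sum_congr rfl fun c hc => ?_
      rw [inner_sum]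
      rw [Finset.sum_eq_single_of_mem c hc]
      · exact inner_self_eq_norm_sq_to_K _
      · intro c' hc' hne
        exact defect_orthogonal habel η ξ hne.symm
    set t : ℝ := ∑ c ∈ F', ‖g c‖ ^ 2 with ht
    have ht0 : 0 ≤ t := Finset.sum_nonneg fun c _ => by positivity
    have hnv : ‖v‖ ^ 2 = t := by
      have h1 := inner_self_eq_norm_sq_to_K (𝕜 := ℂ) v
      rw [hvv] at h1
      have h2 : ((t : ℝ) : ℂ) = ((‖v‖ ^ 2 : ℝ) : ℂ) := by
        rw [h1]; norm_cast
      exact (Complex.ofReal_injective h2).symm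
    have hle : t ≤ ‖v‖ * ‖η‖ := by
      have h1 : ‖(inner ℂ v η : ℂ)‖ ≤ ‖v‖ * ‖η‖ := norm_inner_le_norm v η
      rw [hinner] at h1
      rwa [Complex.norm_real, Real.norm_of_nonneg ht0] at h1
    rw [hstep]
    nlinarith [norm_nonneg v, norm_nonneg η, sq_nonneg (‖v‖ - ‖η‖)]
  have hsummable : Summable f := summable_of_sum_le hf0 hsum_le
  have hcount : (Function.support f).Countable := hsummable.countable_support
  obtain ⟨c, hc⟩ : ∃ c : ℝ, c ∉ (Function.support f ∪ {0} : Set ℝ) := by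
    by_contra hcon
    push_neg at hcon
    have huniv : (Set.univ : Set ℝ).Countable := by
      refine Set.Countable.mono (fun x _ => hcon x) ?_
      exact hcount.union (Set.countable_singleton 0)
    exact Cardinal.not_countable_real huniv
  rw [Set.mem_union] at hc
  push_neg at hc
  obtain ⟨hc1, hc2⟩ := hc
  have hcne : c ≠ 0 := by simpa using hc2
  have hfc : f c = 0 := Function.notMem_support.1 hc1
  have hgc : g c = 0 := by
    have : ‖g c‖ ^ 2 = 0 := by simpa [hf, hcne] using hfc
    have : ‖g c‖ = 0 := by nlinarith [norm_nonneg (g c)]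
    exact norm_eq_zero.1 this
  refine ⟨c, hcne, ?_⟩
  have := sub_eq_zero.1 hgc
  exact this.symm

/-- Inductive construction of the coefficients. -/
lemma exists_coeffs (habel : ∀ x ∈ M, ∀ y ∈ M, x * y = y * x) (n : ℕ) (ξ : Fin n → H) :
    ∃ c : Fin n → ℝ, (∀ h : 0 < n, c ⟨0, h⟩ = 1) ∧
      ∀ j, suppP M (∑ j, (c j : ℂ) • ξ j) (ξ j) = ξ j := by
  induction n with
  | zero => exact ⟨fun _ => 1, fun h => absurd h (lt_irrefl 0), fun j => j.elim0⟩
  | succ n ih =>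
    rcases Nat.eq_zero_or_pos n with rfl | hn
    · refine ⟨fun _ => 1, fun _ => rfl, ?_⟩
      intro j
      have hj : j = 0 := Fin.ext (by omega)
      subst hj
      have hs : (∑ j : Fin 1, (((fun _ => (1 : ℝ)) j : ℝ) : ℂ) • ξ j) = ξ 0 := by
        simp
      rw [hs]
      exact suppP_apply_self (ξ 0)
    · obtain ⟨c', hc'0, hc'⟩ := ih (fun j => ξ j.castSucc)
      set η := ∑ j : Fin n, ((c' j : ℝ) : ℂ) • ξ j.castSucc with hη
      obtain ⟨d, hd0, hdfix⟩ := exists_good habel η (ξ (Fin.last n))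
      refine ⟨Fin.snoc c' d, ?_, ?_⟩
      · intro h
        have h0 : (⟨0, h⟩ : Fin (n + 1)) = Fin.castSucc ⟨0, hn⟩ := rfl
        rw [h0, Fin.snoc_castSucc]
        exact hc'0 hn
      · have hsum : (∑ j : Fin (n + 1), (((Fin.snoc c' d : Fin (n + 1) → ℝ) j : ℝ) : ℂ) • ξ j)
            = η + ((d : ℝ) : ℂ) • ξ (Fin.last n) := by
          rw [Fin.sum_univ_castSucc]
          simp [Fin.snoc_castSucc, Fin.snoc_last, hη]
        rw [hsum]
        set S := η + ((d : ℝ) : ℂ) • ξ (Fin.last n) with hS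
        have hPη : suppP M S η = η := hdfix
        have hPQ : suppP M S * suppP M η = suppP M η :=
          suppP_min ⟨suppP_mem S, suppP_idem S, suppP_selfAdjoint S⟩ hPη
        intro j
        refine Fin.lastCases ?_ ?_ j
        · have h1 : suppP M S S = S := suppP_apply_self S
          have h2 : suppP M S η + ((d : ℝ) : ℂ) • suppP M S (ξ (Fin.last n))
              = η + ((d : ℝ) : ℂ) • ξ (Fin.last n) := by
            rw [← map_smul, ← map_add]
            exact h1
          rw [hPη] at h2
          have h3 := add_left_cancel h2
          have hd : ((d : ℝ) : ℂ) ≠ 0 := Complex.ofReal_ne_zero.2 hd0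
          exact smul_right_injective H hd h3
        · intro i
          have h4 : suppP M S (suppP M η (ξ i.castSucc)) = suppP M η (ξ i.castSucc) :=
            ContinuousLinearMap.ext_iff.1 hPQ (ξ i.castSucc)
          rw [hc' i] at h4
          exact h4

end GoodCoefficient

/-- For an abelian von Neumann algebra `M ⊆ B(H)` and vectors `ξ₁, …, ξ_n ∈ H`, there are
real numbers `c₁ = 1, c₂, …, c_n` with `⋁_j s^M(ξ_j) = s^M(∑_j c_j ξ_j)`.  The join
`⋁_j s^M(ξ_j)` (the smallest projection in `M` fixing every `ξ_j`) is expressed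
relationally, and the equality of projections is expressed as an `iff`. -/
theorem statement13 (M : VonNeumannAlgebra H)
    (habel : ∀ x ∈ M, ∀ y ∈ M, x * y = y * x)
    (n : ℕ) (ξ : Fin n → H) :
    ∃ c : Fin n → ℝ, (∀ h : 0 < n, c ⟨0, h⟩ = 1) ∧
      ∀ s : H →L[ℂ] H,
        (IsProjectionIn M s ∧ (∀ j, s (ξ j) = ξ j) ∧
            ∀ r : H →L[ℂ] H, IsProjectionIn M r → (∀ j, r (ξ j) = ξ j) → r * s = s) ↔
          IsVectorSupport M (∑ j, (c j : ℂ) • ξ j) s := by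
  obtain ⟨c, hc0, hcfix⟩ := exists_coeffs habel n ξ
  refine ⟨c, hc0, ?_⟩
  intro s
  set S := ∑ j, (c j : ℂ) • ξ j with hS
  have hPproj : IsProjectionIn M (suppP M S) :=
    ⟨suppP_mem S, suppP_idem S, suppP_selfAdjoint S⟩
  constructor
  · rintro ⟨hs1, hs2, hs3⟩
    have h1 : suppP M S * s = s := hs3 _ hPproj fun j => hcfix j
    have h2 : s * suppP M S = suppP M S := by
      refine suppP_min hs1 ?_
      show s S = S
      rw [hS, map_sum]
      refine Finset.sum_congr rfl fun j _ => ?_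
      rw [map_smul, hs2 j]
    have hse : s = suppP M S := by
      have hcomm : s * suppP M S = suppP M S * s := habel s hs1.1 _ (suppP_mem S)
      calc s = suppP M S * s := h1.symm
        _ = s * suppP M S := hcomm.symm
        _ = suppP M S := h2
    rw [hse]
    exact suppP_isVectorSupport S
  · rintro ⟨hs1, hs2, hs3⟩
    have h1 : s * suppP M S = suppP M S := (suppP_isVectorSupport S).2.2 s hs1 hs2
    have h2 : suppP M S * s = s := hs3 _ hPproj (suppP_apply_self S)
    have hse : s = suppP M S := by
      have hcomm : s * suppP M S = suppP M S * s := habel s hs1.1 _ (suppP_mem S)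
      calc s = suppP M S * s := h2.symm
        _ = s * suppP M S := hcomm.symm
        _ = suppP M S := h1
    rw [hse]
    refine ⟨hPproj, fun j => hcfix j, fun r hr hrf => ?_⟩
    refine suppP_min hr ?_
    show r S = S
    rw [hS, map_sum]
    refine Finset.sum_congr rfl fun j _ => ?_
    rw [map_smul, hrf j]

end QCG
end
end

section
/- Let M ⊆ B(H) be an abelian von Neumann algebra with a faithful normal semifinite trace τ on its projections, and let λ ≥ 0. Then an operator a ∈ B(H) is λ-constrained if and only if it is λ-vector-constrained. Consequently the support expansion C*-algebra (the norm closure of the constrained operators) equals the vector support expansion C*-algebra (the norm closure of the vector constrained operators). -/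
open scoped ENNReal NNReal

noncomputable section

universe u

namespace QCG

variable {H : Type u} [NormedAddCommGroup H] [InnerProductSpace ℂ H] [CompleteSpace H]

/-- A faithful normal semifinite trace on the projections of `M`. -/
structure IsFNSTrace (M : VonNeumannAlgebra H) (τ : (H →L[ℂ] H) → ℝ≥0∞) : Prop where
  map_zero : τ 0 = 0
  add_orthogonal : ∀ p q : H →L[ℂ] H, IsProjectionIn M p → IsProjectionIn M q →
    p * q = 0 → τ (p + q) = τ p + τ q
  tracial : ∀ v ∈ M, ∀ p q : H →L[ℂ] H, IsProjectionIn M p → IsProjectionIn M q →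
    p = star v * v → q = v * star v → τ p = τ q
  normal : ∀ (ι : Type u) (le : ι → ι → Prop), (∀ i j, ∃ k, le i k ∧ le j k) →
    ∀ p : ι → (H →L[ℂ] H), (∀ i, IsProjectionIn M (p i)) →
      (∀ i j, le i j → p j * p i = p i) →
      ∀ s : H →L[ℂ] H, IsProjectionIn M s → (∀ i, s * p i = p i) →
        (∀ r : H →L[ℂ] H, IsProjectionIn M r → (∀ i, r * p i = p i) → r * s = s) →
        τ s = ⨆ i, τ (p i)
  faithful : ∀ p : H →L[ℂ] H, IsProjectionIn M p → τ p = 0 → p = 0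
  semifinite : ∀ p : H →L[ℂ] H, IsProjectionIn M p → p ≠ 0 →
    ∃ q : H →L[ℂ] H, IsProjectionIn M q ∧ q ≠ 0 ∧ p * q = q ∧ τ q < ⊤

/-- `a` is `λ`-constrained: `τ(s_ℓ^M(aq)) ≤ λ·τ(q)` and `τ(s_ℓ^M(a*q)) ≤ λ·τ(q)` for every
projection `q ∈ M`. -/
def ConstrainedBy (M : VonNeumannAlgebra H) (τ : (H →L[ℂ] H) → ℝ≥0∞) (lam : ℝ≥0)
    (a : H →L[ℂ] H) : Prop :=
  ∀ q : H →L[ℂ] H, IsProjectionIn M q →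
    (∀ s : H →L[ℂ] H, IsLeftSupport M (a * q) s → τ s ≤ (lam : ℝ≥0∞) * τ q) ∧
    (∀ s : H →L[ℂ] H, IsLeftSupport M (star a * q) s → τ s ≤ (lam : ℝ≥0∞) * τ q)

/-- `a` is `λ`-vector-constrained: `τ(s^M(aξ)) ≤ λ·τ(s^M(ξ))` and
`τ(s^M(a*ξ)) ≤ λ·τ(s^M(ξ))` for every vector `ξ ∈ H`. -/
def VecConstrainedBy (M : VonNeumannAlgebra H) (τ : (H →L[ℂ] H) → ℝ≥0∞) (lam : ℝ≥0)
    (a : H →L[ℂ] H) : Prop :=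
  ∀ ξ : H, ∀ s : H →L[ℂ] H, IsVectorSupport M ξ s →
    (∀ t : H →L[ℂ] H, IsVectorSupport M (a ξ) t → τ t ≤ (lam : ℝ≥0∞) * τ s) ∧
    (∀ t : H →L[ℂ] H, IsVectorSupport M (star a ξ) t → τ t ≤ (lam : ℝ≥0∞) * τ s)

section Infra

variable (M : VonNeumannAlgebra H)

lemma mem_comm {m x : H →L[ℂ] H} (hm : m ∈ M) (hx : x ∈ M.commutant) :
    m * x = x * m := VonNeumannAlgebra.mem_commutant_iff.mp hx m hm

/-- The closed `M'`-invariant subspace generated by a set `S` of vectors. -/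
def suppSpace (S : Set H) : Submodule ℂ H :=
  (Submodule.span ℂ {y | ∃ x ∈ M.commutant, ∃ v ∈ S, y = x v}).topologicalClosure

instance (S : Set H) : CompleteSpace (suppSpace M S) :=
  (Submodule.isClosed_topologicalClosure _).completeSpace_coe

lemma mem_suppSpace_of_mem {S : Set H} {v : H} (hv : v ∈ S) : v ∈ suppSpace M S := by
  apply Submodule.le_topologicalClosure
  exact Submodule.subset_span ⟨1, one_mem _, v, hv, (ContinuousLinearMap.one_apply v).symm⟩

lemma suppSpace_invariant {S : Set H} {x : H →L[ℂ] H} (hx : x ∈ M.commutant) :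
    ∀ v ∈ suppSpace M S, x v ∈ suppSpace M S := by
  set W := Submodule.span ℂ {y | ∃ x ∈ M.commutant, ∃ v ∈ S, y = x v} with hW
  have hspan : ∀ w ∈ W, x w ∈ W := by
    intro w hw
    induction hw using Submodule.span_induction with
    | mem y hy =>
      obtain ⟨x', hx', v, hv, rfl⟩ := hy
      exact Submodule.subset_span ⟨x * x', mul_mem hx hx', v, hv,
        (ContinuousLinearMap.mul_apply x x' v).symm⟩
    | zero => simpa using W.zero_mem
    | add y z _ _ hy hz => simpa using W.add_mem hy hz
    | smul c y _ hy => simpa using W.smul_mem c hy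
  intro v hv
  have : v ∈ closure (W : Set H) := hv
  have hmap : Set.MapsTo x (W : Set H) (W : Set H) := hspan
  exact (hmap.closure x.continuous) this

/-- The orthogonal projection onto `suppSpace M S`, as an operator. -/
def Pj (S : Set H) : H →L[ℂ] H :=
  (suppSpace M S).subtypeL ∘L Submodule.orthogonalProjectionOnto (suppSpace M S)

lemma Pj_apply_mem (S : Set H) (v : H) : Pj M S v ∈ suppSpace M S :=
  (Submodule.orthogonalProjectionOnto (suppSpace M S) v).2

lemma Pj_apply_of_mem {S : Set H} {v : H} (hv : v ∈ suppSpace M S) : Pj M S v = v := by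
  simpa [Pj] using congrArg Subtype.val
    (Submodule.orthogonalProjectionOnto_mem_subspace_eq_self (K := suppSpace M S) ⟨v, hv⟩)

lemma Pj_fix {S : Set H} {v : H} (hv : v ∈ S) : Pj M S v = v :=
  Pj_apply_of_mem M (mem_suppSpace_of_mem M hv)

lemma Pj_isSelfAdjoint (S : Set H) : IsSelfAdjoint (Pj M S) :=
  isSelfAdjoint_starProjection (suppSpace M S)

lemma Pj_idem (S : Set H) : IsIdempotentElem (Pj M S) := by
  refine ContinuousLinearMap.ext fun v => ?_
  exact (ContinuousLinearMap.mul_apply _ _ v).trans (Pj_apply_of_mem M (Pj_apply_mem M S v))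

lemma Pj_comm {S : Set H} {x : H →L[ℂ] H} (hx : x ∈ M.commutant) :
    x * Pj M S = Pj M S * x := by
  have key : ∀ y ∈ M.commutant, Pj M S * y * Pj M S = y * Pj M S := by
    intro y hy
    refine ContinuousLinearMap.ext fun v => ?_
    simp only [ContinuousLinearMap.mul_apply]
    exact Pj_apply_of_mem M (suppSpace_invariant M hy _ (Pj_apply_mem M S v))
  have h1 : Pj M S * x * Pj M S = x * Pj M S := key x hx
  have h2 : Pj M S * star x * Pj M S = star x * Pj M S := key (star x) (star_mem hx)
  have h3 := congrArg star h2
  simp only [star_mul, star_star, (Pj_isSelfAdjoint M S).star_eq] at h3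
  calc x * Pj M S = Pj M S * x * Pj M S := h1.symm
    _ = Pj M S * (x * Pj M S) := mul_assoc _ _ _
    _ = Pj M S * x := by rw [← h3]

lemma Pj_mem (S : Set H) : Pj M S ∈ M := by
  have h : Pj M S ∈ Set.centralizer (Set.centralizer (M : Set (H →L[ℂ] H))) := by
    rw [Set.mem_centralizer_iff]
    intro g hg
    have hg' : g ∈ M.commutant := by
      rw [← SetLike.mem_coe, VonNeumannAlgebra.coe_commutant]; exact hg
    exact Pj_comm M hg'
  rw [VonNeumannAlgebra.centralizer_centralizer] at h
  exact h

lemma Pj_isProjectionIn (S : Set H) : IsProjectionIn M (Pj M S) :=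
  ⟨Pj_mem M S, Pj_idem M S, Pj_isSelfAdjoint M S⟩

lemma Pj_min {S : Set H} {r : H →L[ℂ] H} (hr : IsProjectionIn M r)
    (hfix : ∀ v ∈ S, r v = v) : r * Pj M S = Pj M S := by
  have hfix' : ∀ v ∈ suppSpace M S, r v = v := by
    have hspan : ∀ w ∈ Submodule.span ℂ {y | ∃ x ∈ M.commutant, ∃ v ∈ S, y = x v}, r w = w := by
      intro w hw
      induction hw using Submodule.span_induction with
      | mem y hy =>
        obtain ⟨x, hx, v, hv, rfl⟩ := hy
        have : r (x v) = x (r v) := by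
          have := mem_comm M hr.1 hx
          have := congrArg (fun T : H →L[ℂ] H => T v) this
          simpa [ContinuousLinearMap.mul_apply] using this
        rw [this, hfix v hv]
      | zero => simp
      | add y z _ _ hy hz => simp [hy, hz]
      | smul c y _ hy => simp [hy]
    intro v hv
    have hclosed : IsClosed {w : H | r w = w} :=
      isClosed_eq r.continuous continuous_id
    have : (Submodule.span ℂ {y | ∃ x ∈ M.commutant, ∃ v ∈ S, y = x v} : Set H)
        ⊆ {w : H | r w = w} := hspan
    exact closure_minimal this hclosed hv
  refine ContinuousLinearMap.ext fun v => ?_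
  exact (ContinuousLinearMap.mul_apply _ _ v).trans (hfix' _ (Pj_apply_mem M S v))


section Algebra

variable {M : VonNeumannAlgebra H} {τ : (H →L[ℂ] H) → ℝ≥0∞}
variable (habel : ∀ x ∈ M, ∀ y ∈ M, x * y = y * x) (hτ : IsFNSTrace M τ)

lemma isVectorSupport_Pj (ξ : H) : IsVectorSupport M ξ (Pj M {ξ}) :=
  ⟨Pj_isProjectionIn M _, Pj_fix M rfl,
    fun p hp hfix => Pj_min M hp fun v hv => by rwa [Set.mem_singleton_iff.mp hv]⟩

lemma isLeftSupport_Pj (b : H →L[ℂ] H) : IsLeftSupport M b (Pj M (Set.range b)) := by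
  refine ⟨Pj_isProjectionIn M _, ?_, ?_⟩
  · exact ContinuousLinearMap.ext fun v => Pj_fix M ⟨v, rfl⟩
  · intro p hp hpb
    refine Pj_min M hp ?_
    rintro v ⟨w, rfl⟩
    exact (ContinuousLinearMap.mul_apply p b w).symm.trans (by rw [hpb])

lemma proj_zero : IsProjectionIn M 0 :=
  ⟨zero_mem _, by simp [IsIdempotentElem], by simp [IsSelfAdjoint]⟩

include habel in
lemma selfadj_mul {p q : H →L[ℂ] H} (hp : IsProjectionIn M p) (hq : IsProjectionIn M q) :
    IsSelfAdjoint (p * q) := by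
  rw [IsSelfAdjoint, star_mul, hp.2.2.star_eq, hq.2.2.star_eq]
  exact (habel _ hp.1 _ hq.1).symm

include habel in
lemma proj_mul {p q : H →L[ℂ] H} (hp : IsProjectionIn M p) (hq : IsProjectionIn M q) :
    IsProjectionIn M (p * q) := by
  refine ⟨mul_mem hp.1 hq.1, ?_, selfadj_mul habel hp hq⟩
  have hc : q * p = p * q := habel _ hq.1 _ hp.1
  show p * q * (p * q) = p * q
  calc p * q * (p * q) = p * (q * p * q) := by rw [mul_assoc, mul_assoc]
    _ = p * (p * q * q) := by rw [hc]
    _ = p * (p * (q * q)) := by rw [mul_assoc]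
    _ = p * p * (q * q) := by rw [mul_assoc]
    _ = p * q := by rw [hp.2.1, hq.2.1]

lemma proj_add_orth {p q : H →L[ℂ] H} (hp : IsProjectionIn M p) (hq : IsProjectionIn M q)
    (h : p * q = 0) : IsProjectionIn M (p + q) := by
  have h' : q * p = 0 := by
    have := congrArg star h
    rwa [star_mul, hp.2.2.star_eq, hq.2.2.star_eq, star_zero] at this
  refine ⟨add_mem hp.1 hq.1, ?_, hp.2.2.add hq.2.2⟩
  show (p + q) * (p + q) = p + q
  rw [add_mul, mul_add, mul_add, hp.2.1, hq.2.1, h, h', add_zero, zero_add]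

lemma proj_sub {p q : H →L[ℂ] H} (hp : IsProjectionIn M p) (hq : IsProjectionIn M q)
    (h : q * p = p) : IsProjectionIn M (q - p) ∧ p * (q - p) = 0 := by
  have h' : p * q = p := by
    have := congrArg star h
    rwa [star_mul, hp.2.2.star_eq, hq.2.2.star_eq] at this
  constructor
  · refine ⟨sub_mem hq.1 hp.1, ?_, hq.2.2.sub hp.2.2⟩
    show (q - p) * (q - p) = q - p
    rw [sub_mul, mul_sub, mul_sub, hq.2.1, hp.2.1, h, h']
    abel
  · rw [mul_sub, h', hp.2.1, sub_self]

include hτ in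
lemma tau_mono {p q : H →L[ℂ] H} (hp : IsProjectionIn M p) (hq : IsProjectionIn M q)
    (h : q * p = p) : τ p ≤ τ q := by
  obtain ⟨hsub, horth⟩ := proj_sub hp hq h
  have := hτ.add_orthogonal p (q - p) hp hsub horth
  rw [add_sub_cancel] at this
  rw [this]
  exact le_self_add

/-- The join of two commuting projections. -/
def jn (p q : H →L[ℂ] H) : H →L[ℂ] H := p + (q - p * q)

include habel hτ in
lemma jn_spec {p q : H →L[ℂ] H} (hp : IsProjectionIn M p) (hq : IsProjectionIn M q) :
    IsProjectionIn M (jn p q) ∧ τ (jn p q) ≤ τ p + τ q ∧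
      (∀ v, p v = v → jn p q v = v) ∧ (∀ v, q v = v → jn p q v = v) := by
  have hc : q * p = p * q := habel _ hq.1 _ hp.1
  have hqpq : q * (p * q) = p * q := by
    rw [← mul_assoc, hc, mul_assoc, hq.2.1]
  have hvproj : IsProjectionIn M (q - p * q) ∧ (p * q) * (q - p * q) = 0 :=
    proj_sub (proj_mul habel hp hq) hq hqpq
  have horth : p * (q - p * q) = 0 := by
    rw [mul_sub, ← mul_assoc, hp.2.1, sub_self]
  have hjnproj : IsProjectionIn M (jn p q) := proj_add_orth hp hvproj.1 horth
  refine ⟨hjnproj, ?_, ?_, ?_⟩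
  · rw [jn, hτ.add_orthogonal p (q - p * q) hp hvproj.1 horth]
    exact add_le_add_right (tau_mono hτ hvproj.1 hq (by rw [mul_sub, hq.2.1, hqpq])) _
  · intro v hv
    have : (p * q) v = q v := by
      conv_lhs => rw [← hc, ContinuousLinearMap.mul_apply, hv]
    simp [jn, ContinuousLinearMap.add_apply, ContinuousLinearMap.sub_apply, hv, this]
  · intro v hv
    have : (p * q) v = p v := by rw [ContinuousLinearMap.mul_apply, hv]
    simp [jn, ContinuousLinearMap.add_apply, ContinuousLinearMap.sub_apply, hv, this]

end Algebra

section Main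

variable {M : VonNeumannAlgebra H} {τ : (H →L[ℂ] H) → ℝ≥0∞}

lemma list_bound (habel : ∀ x ∈ M, ∀ y ∈ M, x * y = y * x) (hτ : IsFNSTrace M τ)
    {lam : ℝ≥0} {a q : H →L[ℂ] H}
    (hq : IsProjectionIn M q) (hfin : (lam : ℝ≥0∞) * τ q ≠ ⊤)
    (hv : ∀ ζ : H, q ζ = ζ → τ (Pj M {a ζ}) ≤ (lam : ℝ≥0∞) * τ q) :
    ∀ (n : ℕ) (l : List H), l.length = n → (∀ ζ ∈ l, q ζ = ζ) →
      ∀ ε : ℝ≥0∞, 0 < ε → ε ≠ ⊤ →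
        τ (Pj M (⇑a '' {ζ | ζ ∈ l})) ≤ (lam : ℝ≥0∞) * τ q + n * ε := by
  intro n
  induction n with
  | zero =>
    intro l hlen _ ε _ _
    have hl : l = [] := List.length_eq_zero_iff.mp hlen
    subst hl
    have hempty : (⇑a '' {ζ | ζ ∈ ([] : List H)}) = (∅ : Set H) := by simp
    rw [hempty]
    have h0 : (0 : H →L[ℂ] H) * Pj M (∅ : Set H) = Pj M ∅ :=
      Pj_min M proj_zero (fun v hv => absurd hv (Set.notMem_empty v))
    rw [zero_mul] at h0
    rw [← h0, hτ.map_zero]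
    exact zero_le
  | succ n ih =>
    intro l hlen hl ε hε hεtop
    match l, hlen with
    | ζ₁ :: l', hlen =>
    match l', hlen with
    | [], _ =>
      have hone : (⇑a '' {ζ | ζ ∈ [ζ₁]}) = {a ζ₁} := by simp
      rw [hone]
      exact le_trans (hv ζ₁ (hl ζ₁ (by simp))) le_self_add
    | ζ₂ :: rest, hlen =>
      have hq1 : q ζ₁ = ζ₁ := hl ζ₁ (by simp)
      have hq2 : q ζ₂ = ζ₂ := hl ζ₂ (by simp)
      set ζc : ℕ → H := fun c => ζ₁ + (c : ℂ) • ζ₂ with hζc_def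
      have hqζc : ∀ c, q (ζc c) = ζc c := fun c => by
        simp [hζc_def, map_add, map_smul, hq1, hq2]
      have haζc : ∀ c, a (ζc c) = a ζ₁ + (c : ℂ) • a ζ₂ := fun c => by
        simp [hζc_def, map_add, map_smul]
      set S := Pj M {a ζ₁, a ζ₂} with hS_def
      have hS : IsProjectionIn M S := Pj_isProjectionIn M _
      have hS1 : S (a ζ₁) = a ζ₁ := Pj_fix M (by simp)
      have hS2 : S (a ζ₂) = a ζ₂ := Pj_fix M (by simp)
      have hSc : ∀ c, S (a (ζc c)) = a (ζc c) := fun c => by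
        rw [haζc, map_add, map_smul, hS1, hS2]
      set sc : ℕ → (H →L[ℂ] H) := fun c => Pj M {a (ζc c)} with hsc_def
      have hscproj : ∀ c, IsProjectionIn M (sc c) := fun c => Pj_isProjectionIn M _
      have hscfix : ∀ c, sc c (a (ζc c)) = a (ζc c) := fun c => Pj_fix M rfl
      have hSsc : ∀ c, S * sc c = sc c := fun c =>
        Pj_min M hS (fun v hv => by rw [Set.mem_singleton_iff.mp hv]; exact hSc c)
      have hscS : ∀ c, sc c * S = sc c := fun c => by
        rw [habel _ (hscproj c).1 _ hS.1]; exact hSsc c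
      set b : ℕ → (H →L[ℂ] H) := fun c => S - sc c with hb_def
      have hbproj : ∀ c, IsProjectionIn M (b c) := fun c => (proj_sub (hscproj c) hS (hSsc c)).1
      have hbS : ∀ c, b c * S = b c := fun c => by
        show (S - sc c) * S = S - sc c
        rw [sub_mul, hS.2.1, hscS c]
      have hSb : ∀ c, S * b c = b c := fun c => by
        show S * (S - sc c) = S - sc c
        rw [mul_sub, hS.2.1, hSsc c]
      have hbapp : ∀ c, b c (a (ζc c)) = 0 := fun c => by
        show (S - sc c) (a (ζc c)) = 0
        rw [ContinuousLinearMap.sub_apply, hSc c, hscfix c, sub_self]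
      have horth : ∀ c c' : ℕ, c ≠ c' → b c * b c' = 0 := by
        intro c c' hcc
        set r := b c * b c' with hr_def
        have hrproj : IsProjectionIn M r := proj_mul habel (hbproj c) (hbproj c')
        have happc : r (a (ζc c)) = 0 := by
          rw [hr_def, habel _ (hbproj c).1 _ (hbproj c').1, ContinuousLinearMap.mul_apply,
            hbapp c, map_zero]
        have happc' : r (a (ζc c')) = 0 := by
          rw [hr_def, ContinuousLinearMap.mul_apply, hbapp c', map_zero]
        have hdiff : a (ζc c) - a (ζc c') = ((c : ℂ) - (c' : ℂ)) • a ζ₂ := by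
          rw [haζc, haζc, add_sub_add_left_eq_sub, ← sub_smul]
        have hζ2 : r (a ζ₂) = 0 := by
          have hne : (c : ℂ) - (c' : ℂ) ≠ 0 := sub_ne_zero.mpr (by exact_mod_cast hcc)
          have h1 : r (((c : ℂ) - (c' : ℂ)) • a ζ₂) = 0 := by
            rw [← hdiff, map_sub, happc, happc', sub_zero]
          rw [map_smul] at h1
          exact (smul_eq_zero.mp h1).resolve_left hne
        have hζ1 : r (a ζ₁) = 0 := by
          have h1 : a ζ₁ = a (ζc c) - (c : ℂ) • a ζ₂ := by rw [haζc]; abel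
          rw [h1, map_sub, happc, map_smul, hζ2, smul_zero, sub_zero]
        have hrS : r * S = r := by rw [hr_def, mul_assoc, hbS c']
        have hSr : S * r = r := by rw [hr_def, ← mul_assoc, hSb c]
        have hSsubr : IsProjectionIn M (S - r) := (proj_sub hrproj hS hSr).1
        have hfixmin : (S - r) * S = S := by
          refine Pj_min M hSsubr ?_
          intro v hv
          rcases Set.mem_insert_iff.mp hv with rfl | hv
          · rw [ContinuousLinearMap.sub_apply, hS1, hζ1, sub_zero]
          · rw [Set.mem_singleton_iff.mp hv, ContinuousLinearMap.sub_apply, hS2, hζ2, sub_zero]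
        have h2 : (S - r) * S = S - r := by rw [sub_mul, hS.2.1, hrS]
        exact sub_eq_self.mp (h2.symm.trans hfixmin)
      -- τ S is finite
      have hτS : τ S ≤ (lam : ℝ≥0∞) * τ q + (lam : ℝ≥0∞) * τ q := by
        obtain ⟨hjp, hjτ, hjfix1, hjfix2⟩ :=
          jn_spec habel hτ (Pj_isProjectionIn M {a ζ₁}) (Pj_isProjectionIn M {a ζ₂})
        have heS : jn (Pj M {a ζ₁}) (Pj M {a ζ₂}) * S = S := by
          refine Pj_min M hjp ?_
          intro v hv
          rcases Set.mem_insert_iff.mp hv with rfl | hv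
          · exact hjfix1 _ (Pj_fix M rfl)
          · rw [Set.mem_singleton_iff.mp hv]
            exact hjfix2 _ (Pj_fix M rfl)
        exact le_trans (tau_mono hτ hS hjp heS)
          (le_trans hjτ (add_le_add (hv ζ₁ hq1) (hv ζ₂ hq2)))
      have hτStop : τ S ≠ ⊤ :=
        ne_top_of_le_ne_top (ENNReal.add_ne_top.mpr ⟨hfin, hfin⟩) hτS
      -- find a good scalar
      have hex : ∃ c : ℕ, τ (b c) ≤ ε := by
        by_contra hcon
        push_neg at hcon
        have hcum : ∀ k : ℕ, IsProjectionIn M (∑ c ∈ Finset.range k, b c) ∧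
            τ (∑ c ∈ Finset.range k, b c) = ∑ c ∈ Finset.range k, τ (b c) ∧
            S * (∑ c ∈ Finset.range k, b c) = ∑ c ∈ Finset.range k, b c := by
          intro k
          induction k with
          | zero =>
            simp only [Finset.sum_range_zero]
            exact ⟨proj_zero, hτ.map_zero, mul_zero S⟩
          | succ k ihk =>
            obtain ⟨hPk, hτk, hSk⟩ := ihk
            have horthk : (∑ c ∈ Finset.range k, b c) * b k = 0 := by
              rw [Finset.sum_mul]
              exact Finset.sum_eq_zero fun c hc => horth c k (Finset.mem_range.mp hc).ne
            rw [Finset.sum_range_succ]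
            refine ⟨proj_add_orth hPk (hbproj k) horthk, ?_, ?_⟩
            · rw [hτ.add_orthogonal _ _ hPk (hbproj k) horthk, hτk, Finset.sum_range_succ]
            · rw [mul_add, hSk, hSb k]
        have hkε : ∀ k : ℕ, (k : ℝ≥0∞) * ε ≤ τ S := by
          intro k
          obtain ⟨hPk, hτk, hSk⟩ := hcum k
          calc (k : ℝ≥0∞) * ε = ∑ _c ∈ Finset.range k, ε := by
                rw [Finset.sum_const, Finset.card_range, nsmul_eq_mul]
            _ ≤ ∑ c ∈ Finset.range k, τ (b c) := Finset.sum_le_sum fun c _ => (hcon c).le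
            _ = τ (∑ c ∈ Finset.range k, b c) := hτk.symm
            _ ≤ τ S := tau_mono hτ hPk hS hSk
        obtain ⟨k, hk⟩ := ENNReal.exists_nat_gt ((ENNReal.div_lt_top hτStop hε.ne').ne)
        have hlt : τ S < (k : ℝ≥0∞) * ε :=
          (ENNReal.div_lt_iff (Or.inl hε.ne') (Or.inl hεtop)).mp hk
        exact absurd (hkε k) (not_le.mpr hlt)
      obtain ⟨c, hc⟩ := hex
      -- apply the induction hypothesis to the combined list
      set l'' : List H := ζc c :: rest with hl''_def
      have hlen'' : l''.length = n := by
        simp only [hl''_def, List.length_cons]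
        simp only [List.length_cons] at hlen
        omega
      have hl''q : ∀ ζ ∈ l'', q ζ = ζ := by
        intro ζ hζ
        rcases List.mem_cons.mp hζ with rfl | hζ
        · exact hqζc c
        · exact hl ζ (by simp [hζ])
      have hIH := ih l'' hlen'' hl''q ε hε hεtop
      set p' := Pj M (⇑a '' {ζ | ζ ∈ l''}) with hp'_def
      have hp' : IsProjectionIn M p' := Pj_isProjectionIn M _
      have hp'c : p' (a (ζc c)) = a (ζc c) :=
        Pj_fix M ⟨ζc c, List.mem_cons_self, rfl⟩
      have hp'rest : ∀ ζ ∈ rest, p' (a ζ) = a ζ := fun ζ hζ =>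
        Pj_fix M ⟨ζ, List.mem_cons_of_mem _ hζ, rfl⟩
      obtain ⟨hep, heτ, hefix1, hefix2⟩ := jn_spec habel hτ hp' (hbproj c)
      set e := jn p' (b c) with he_def
      have hesc : e * sc c = sc c :=
        Pj_min M hep (fun v hv => by rw [Set.mem_singleton_iff.mp hv]; exact hefix1 _ hp'c)
      have hebc : e * b c = b c := by
        have hidem := (hbproj c).2.1
        rw [he_def, jn, add_mul, sub_mul, mul_assoc, hidem]
        abel
      have hscbc : sc c + b c = S := by
        show sc c + (S - sc c) = S
        abel
      have heS : e * S = S := by rw [← hscbc, mul_add, hesc, hebc]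
      have hefixS : ∀ v, S v = v → e v = v := by
        intro v hv
        conv_lhs => rw [← hv, ← ContinuousLinearMap.mul_apply, heS]
        exact hv
      have hefix : ∀ v ∈ ⇑a '' {ζ | ζ ∈ ζ₁ :: ζ₂ :: rest}, e v = v := by
        rintro v ⟨ζ, hζ, rfl⟩
        rcases List.mem_cons.mp hζ with rfl | hζ
        · exact hefixS _ hS1
        rcases List.mem_cons.mp hζ with rfl | hζ
        · exact hefixS _ hS2
        · exact hefix1 _ (hp'rest ζ hζ)
      have hmin : e * Pj M (⇑a '' {ζ | ζ ∈ ζ₁ :: ζ₂ :: rest}) =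
          Pj M (⇑a '' {ζ | ζ ∈ ζ₁ :: ζ₂ :: rest}) := Pj_min M hep hefix
      calc τ (Pj M (⇑a '' {ζ | ζ ∈ ζ₁ :: ζ₂ :: rest}))
          ≤ τ e := tau_mono hτ (Pj_isProjectionIn M _) hep hmin
        _ ≤ τ p' + τ (b c) := heτ
        _ ≤ ((lam : ℝ≥0∞) * τ q + (n : ℝ≥0∞) * ε) + ε := add_le_add hIH hc
        _ = (lam : ℝ≥0∞) * τ q + ((n : ℕ) + 1 : ℕ) * ε := by
            rw [add_assoc, Nat.cast_succ, add_mul, one_mul]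

end Main

section Final

variable {M : VonNeumannAlgebra H} {τ : (H →L[ℂ] H) → ℝ≥0∞}

lemma op_of_vec (habel : ∀ x ∈ M, ∀ y ∈ M, x * y = y * x) (hτ : IsFNSTrace M τ)
    {lam : ℝ≥0} {a : H →L[ℂ] H}
    (hvec : ∀ ξ : H, ∀ s, IsVectorSupport M ξ s → ∀ t, IsVectorSupport M (a ξ) t →
      τ t ≤ (lam : ℝ≥0∞) * τ s) :
    ∀ q, IsProjectionIn M q → ∀ s, IsLeftSupport M (a * q) s →
      τ s ≤ (lam : ℝ≥0∞) * τ q := by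
  intro q hq s hs
  classical
  by_cases hfin : (lam : ℝ≥0∞) * τ q = ⊤
  · rw [hfin]; exact le_top
  by_cases hqtop : τ q = ⊤
  · -- here `lam = 0`, so `a = 0`
    have hlam0 : (lam : ℝ≥0∞) = 0 := by
      by_contra hlam
      exact hfin (by rw [hqtop, ENNReal.mul_top hlam])
    have haz : ∀ ξ : H, a ξ = 0 := by
      intro ξ
      have h1 := hvec ξ _ (isVectorSupport_Pj ξ) _ (isVectorSupport_Pj (a ξ))
      rw [hlam0, zero_mul, nonpos_iff_eq_zero] at h1
      have h2 := hτ.faithful _ (Pj_isProjectionIn M {a ξ}) h1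
      have h3 : Pj M {a ξ} (a ξ) = a ξ := Pj_fix M rfl
      rw [h2] at h3
      simpa using h3.symm
    have haq : a * q = 0 := ContinuousLinearMap.ext fun v => by
      simp [ContinuousLinearMap.mul_apply, haz]
    have hs0 : (0 : H →L[ℂ] H) * s = s :=
      hs.2.2 0 proj_zero (by rw [haq, mul_zero])
    rw [← hs0, zero_mul, hτ.map_zero]
    exact zero_le
  -- main case: use normality to reduce to finitely many vectors
  set P : Finset H → (H →L[ℂ] H) := fun F => Pj M ((fun v => a (q v)) '' ↑F) with hP_def
  have hPproj : ∀ F, IsProjectionIn M (P F) := fun F => Pj_isProjectionIn M _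
  have hPfix : ∀ (F : Finset H), ∀ η ∈ F, P F (a (q η)) = a (q η) := fun F η hη =>
    Pj_fix M ⟨η, by simpa using hη, rfl⟩
  have hPmono : ∀ F G : Finset H, F ⊆ G → P G * P F = P F := by
    intro F G hFG
    refine Pj_min M (hPproj G) ?_
    rintro v ⟨η, hη, rfl⟩
    exact hPfix G η (hFG (by simpa using hη))
  have hsP : ∀ F, s * P F = P F := by
    intro F
    refine Pj_min M hs.1 ?_
    rintro v ⟨η, hη, rfl⟩
    have h1 := congrArg (fun T : H →L[ℂ] H => T η) hs.2.1
    simpa [ContinuousLinearMap.mul_apply] using h1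
  have hlub : ∀ r, IsProjectionIn M r → (∀ F, r * P F = P F) → r * s = s := by
    intro r hr hrP
    refine hs.2.2 r hr (ContinuousLinearMap.ext fun η => ?_)
    have h1 : P {η} (a (q η)) = a (q η) := hPfix {η} η (Finset.mem_singleton_self η)
    have h2 := congrArg (fun T : H →L[ℂ] H => T (a (q η))) (hrP {η})
    simp only [ContinuousLinearMap.mul_apply] at h2
    calc r ((a * q) η) = r (a (q η)) := by rw [ContinuousLinearMap.mul_apply]
      _ = r (P {η} (a (q η))) := by rw [h1]
      _ = P {η} (a (q η)) := h2
      _ = (a * q) η := by rw [h1, ContinuousLinearMap.mul_apply]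
  have hnormal := hτ.normal (Finset H) (· ⊆ ·)
    (fun F G => ⟨F ∪ G, Finset.subset_union_left, Finset.subset_union_right⟩)
    P hPproj hPmono s hs.1 hsP hlub
  rw [hnormal]
  refine iSup_le fun F => ?_
  set l : List H := F.toList.map ⇑q with hl_def
  have hset : ((fun v => a (q v)) '' ↑F : Set H) = ⇑a '' {ζ | ζ ∈ l} := by
    ext y
    constructor
    · rintro ⟨η, hη, rfl⟩
      exact ⟨q η, by simp [hl_def]; exact ⟨η, by simpa using hη, rfl⟩, rfl⟩
    · rintro ⟨ζ, hζ, rfl⟩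
      rw [hl_def] at hζ
      obtain ⟨η, hη, rfl⟩ := List.mem_map.mp hζ
      exact ⟨η, by simpa using hη, rfl⟩
  have hl : ∀ ζ ∈ l, q ζ = ζ := by
    intro ζ hζ
    rw [hl_def] at hζ
    obtain ⟨η, hη, rfl⟩ := List.mem_map.mp hζ
    have h1 := congrArg (fun T : H →L[ℂ] H => T η) hq.2.1
    simpa [ContinuousLinearMap.mul_apply] using h1
  have hv : ∀ ζ : H, q ζ = ζ → τ (Pj M {a ζ}) ≤ (lam : ℝ≥0∞) * τ q := by
    intro ζ hζ
    have h1 := hvec ζ _ (isVectorSupport_Pj ζ) _ (isVectorSupport_Pj (a ζ))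
    refine h1.trans (mul_le_mul_right ?_ _)
    exact tau_mono hτ (Pj_isProjectionIn M _) hq
      (Pj_min M hq (fun v hv => by rwa [Set.mem_singleton_iff.mp hv]))
  have hPF : P F = Pj M (⇑a '' {ζ | ζ ∈ l}) := by rw [hP_def]; exact congrArg (Pj M) hset
  rw [hPF]
  refine ENNReal.le_of_forall_pos_le_add fun ε hε _ => ?_
  set N : ℝ≥0∞ := (l.length : ℝ≥0∞) + 1 with hN_def
  have hN0 : N ≠ 0 := by simp [hN_def]
  have hNtop : N ≠ ⊤ := by simp [hN_def]
  have hε0 : (ε : ℝ≥0∞) ≠ 0 := by exact_mod_cast hε.ne'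
  have hε0' : (0 : ℝ≥0∞) < (ε : ℝ≥0∞) / N := ENNReal.div_pos hε0 hNtop
  have hεtop' : (ε : ℝ≥0∞) / N ≠ ⊤ :=
    (ENNReal.div_lt_top ENNReal.coe_ne_top hN0).ne
  have hb := list_bound habel hτ hq hfin hv l.length l rfl hl ((ε : ℝ≥0∞) / N) hε0' hεtop'
  refine hb.trans (add_le_add_right ?_ _)
  calc (l.length : ℝ≥0∞) * ((ε : ℝ≥0∞) / N) ≤ N * ((ε : ℝ≥0∞) / N) := by
        refine mul_le_mul_left ?_ _
        rw [hN_def]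
        exact le_self_add
    _ = ε := ENNReal.mul_div_cancel hN0 hNtop

lemma vec_of_op (hτ : IsFNSTrace M τ) {lam : ℝ≥0} {a : H →L[ℂ] H}
    (hop : ∀ q, IsProjectionIn M q → ∀ u, IsLeftSupport M (a * q) u →
      τ u ≤ (lam : ℝ≥0∞) * τ q) :
    ∀ ξ : H, ∀ s, IsVectorSupport M ξ s → ∀ t, IsVectorSupport M (a ξ) t →
      τ t ≤ (lam : ℝ≥0∞) * τ s := by
  intro ξ s hsv t htv
  have hu := hop s hsv.1 _ (isLeftSupport_Pj (a * s))
  have hufix : Pj M (Set.range ⇑(a * s)) (a ξ) = a ξ := by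
    have h1 : a ξ = (a * s) ξ := by rw [ContinuousLinearMap.mul_apply, hsv.2.1]
    rw [h1]
    exact Pj_fix M ⟨ξ, rfl⟩
  have h2 := htv.2.2 _ (Pj_isProjectionIn M _) hufix
  exact le_trans (tau_mono hτ htv.1 (Pj_isProjectionIn M _) h2) hu

end Final

end Infra

/-- For an abelian von Neumann algebra `M ⊆ B(H)` with a faithful normal semifinite trace,
an operator is `λ`-constrained iff it is `λ`-vector-constrained; consequently the support
expansion C*-algebra coincides with the vector support expansion C*-algebra. -/
theorem statement14 (M : VonNeumannAlgebra H)
    (habel : ∀ x ∈ M, ∀ y ∈ M, x * y = y * x)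
    (τ : (H →L[ℂ] H) → ℝ≥0∞) (hτ : IsFNSTrace M τ) :
    (∀ (lam : ℝ≥0) (a : H →L[ℂ] H),
      ConstrainedBy M τ lam a ↔ VecConstrainedBy M τ lam a) ∧
    closure {a : H →L[ℂ] H | ∃ lam : ℝ≥0, ConstrainedBy M τ lam a} =
      closure {a : H →L[ℂ] H | ∃ lam : ℝ≥0, VecConstrainedBy M τ lam a} := by
  have key : ∀ (lam : ℝ≥0) (a : H →L[ℂ] H),
      ConstrainedBy M τ lam a ↔ VecConstrainedBy M τ lam a := by
    intro lam a
    constructor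
    · intro hC ξ s hsv
      exact ⟨fun t htv => vec_of_op hτ (fun q hq u hu => (hC q hq).1 u hu) ξ s hsv t htv,
        fun t htv => vec_of_op hτ (fun q hq u hu => (hC q hq).2 u hu) ξ s hsv t htv⟩
    · intro hV q hq
      exact ⟨fun u hu => op_of_vec habel hτ (fun ξ s hsv t htv => (hV ξ s hsv).1 t htv) q hq u hu,
        fun u hu => op_of_vec habel hτ (fun ξ s hsv t htv => (hV ξ s hsv).2 t htv) q hq u hu⟩
  refine ⟨key, ?_⟩
  have hsets : {a : H →L[ℂ] H | ∃ lam : ℝ≥0, ConstrainedBy M τ lam a} =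
      {a : H →L[ℂ] H | ∃ lam : ℝ≥0, VecConstrainedBy M τ lam a} :=
    Set.ext fun a => exists_congr fun lam => key lam a
  rw [hsets]

end QCG
end
end

section
/- Let (M ⊆ B(H_M), 𝒱) and (N ⊆ B(H_N), 𝒰) be quantum coarse spaces, and let φ : M → N be a surjective unital weak*-continuous *-homomorphism that is spatially implemented: there exist a central projection r ∈ M with ker φ = (1−r)M and an isometry u : H_N → H_M with uu* = r such that φ(a) = u*au for all a ∈ M. Assume φ is quantum coarse, i.e., for every U ∈ 𝒰 there is V ∈ 𝒱 such that for all orthogonal projections p, q of M ⊗̄ B(ℓ²): if ((u⊗1)*p(u⊗1), (u⊗1)*q(u⊗1)) ∈ R_U then (p,q) ∈ R_V. Then the map b ↦ ubu* is an isometric *-homomorphism from C*_u(N,𝒰) into C*_u(M,𝒱); that is, C*_u(N,𝒰) spatially embeds into C*_u(M,𝒱). -/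
open scoped ENNReal NNReal

noncomputable section

universe u

namespace QCG

variable {H : Type u} [NormedAddCommGroup H] [InnerProductSpace ℂ H] [CompleteSpace H]

set_option linter.unusedSectionVars false
set_option maxHeartbeats 1000000

section Helpers

lemma summable_inner_op {ι : Type*} (x : H →L[ℂ] H) {ξ η : ι → H}
    (hξ : Summable fun i => ‖ξ i‖ ^ 2) (hη : Summable fun i => ‖η i‖ ^ 2) :
    Summable fun i => (inner ℂ (x (ξ i)) (η i) : ℂ) := by
  refine Summable.of_norm_bounded (g := fun i => ‖x‖ * ((‖ξ i‖ ^ 2 + ‖η i‖ ^ 2) / 2)) ?_ ?_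
  · exact (((hξ.add hη).div_const 2).mul_left ‖x‖)
  · intro i
    have h1 : ‖(inner ℂ (x (ξ i)) (η i) : ℂ)‖ ≤ ‖x (ξ i)‖ * ‖η i‖ := norm_inner_le_norm _ _
    have h2 : ‖x (ξ i)‖ ≤ ‖x‖ * ‖ξ i‖ := x.le_opNorm _
    have h3 : (0:ℝ) ≤ ‖η i‖ := norm_nonneg _
    have h4 : (0:ℝ) ≤ ‖ξ i‖ := norm_nonneg _
    have h5 : (0:ℝ) ≤ ‖x‖ := norm_nonneg _
    nlinarith [sq_nonneg (‖ξ i‖ - ‖η i‖)]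

lemma memℓp_of_sq_summable {g : ℕ → H} (hg : Summable fun n => ‖g n‖ ^ 2) :
    Memℓp g 2 := by
  apply memℓp_gen
  have h2 : ((2:ℝ≥0∞)).toReal = ((2:ℕ):ℝ) := by norm_num
  rw [h2]
  simpa [Real.rpow_natCast] using hg

variable {amp : (H →L[ℂ] H) → (ampSpace H →L[ℂ] ampSpace H)}

lemma amp_comp (hamp : IsAmplification amp) (a b : H →L[ℂ] H) (ξ : ampSpace H) :
    amp a (amp b ξ) = amp (a * b) ξ := by
  apply lp.ext; funext n
  rw [hamp, hamp, hamp]; rfl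

lemma amp_one (hamp : IsAmplification amp) (ξ : ampSpace H) : amp 1 ξ = ξ := by
  apply lp.ext; funext n; rw [hamp]; rfl

lemma amp_inner (hamp : IsAmplification amp) (a : H →L[ℂ] H) (ξ η : ampSpace H) :
    (inner ℂ (amp a ξ) η : ℂ) = ∑' n, (inner ℂ (a (ξ n)) (η n) : ℂ) := by
  rw [lp.inner_eq_tsum]
  exact tsum_congr fun n => by rw [hamp]

lemma amp_adjoint (hamp : IsAmplification amp) (a : H →L[ℂ] H) :
    ContinuousLinearMap.adjoint (amp a) = amp (ContinuousLinearMap.adjoint a) := by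
  symm
  rw [ContinuousLinearMap.eq_adjoint_iff]
  intro ξ η
  rw [amp_inner hamp, lp.inner_eq_tsum]
  exact tsum_congr fun n => by
    rw [hamp, ContinuousLinearMap.adjoint_inner_left]

/-- Bounded operator version of the orthogonal projection onto a complete submodule. -/
def projCLM (K : Submodule ℂ H) [CompleteSpace K] : H →L[ℂ] H :=
  K.subtypeL ∘L K.orthogonalProjectionOnto

lemma projCLM_apply_mem (K : Submodule ℂ H) [CompleteSpace K] (x : H) :
    projCLM K x ∈ K := by
  simp [projCLM]

lemma projCLM_eq_self (K : Submodule ℂ H) [CompleteSpace K] {x : H} (hx : x ∈ K) :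
    projCLM K x = x := by
  simpa [projCLM] using (K.starProjection_eq_self_iff).2 hx

lemma projCLM_eq_zero (K : Submodule ℂ H) [CompleteSpace K] {x : H} (hx : x ∈ Kᗮ) :
    projCLM K x = 0 := by
  simp [projCLM, Submodule.orthogonalProjectionOnto_apply_of_mem_orthogonal hx]

lemma projCLM_idem (K : Submodule ℂ H) [CompleteSpace K] :
    IsIdempotentElem (projCLM K) := by
  rw [IsIdempotentElem]
  ext x
  rw [ContinuousLinearMap.mul_apply]
  exact projCLM_eq_self K (projCLM_apply_mem K x)

lemma projCLM_sa (K : Submodule ℂ H) [CompleteSpace K] :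
    IsSelfAdjoint (projCLM K) := isSelfAdjoint_starProjection K

lemma sub_projCLM_mem_orthogonal (K : Submodule ℂ H) [CompleteSpace K] (x : H) :
    x - projCLM K x ∈ Kᗮ := K.sub_starProjection_mem_orthogonal x

lemma projCLM_comm (K : Submodule ℂ H) [CompleteSpace K] (T : H →L[ℂ] H)
    (h1 : ∀ x ∈ K, T x ∈ K) (h2 : ∀ x ∈ K, ContinuousLinearMap.adjoint T x ∈ K) :
    T * projCLM K = projCLM K * T := by
  ext x
  rw [ContinuousLinearMap.mul_apply, ContinuousLinearMap.mul_apply]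
  have hdec : T x = T (projCLM K x) + T (x - projCLM K x) := by
    rw [← map_add]; congr 1; abel
  have h3 : T (x - projCLM K x) ∈ Kᗮ := by
    rw [Submodule.mem_orthogonal']
    intro k hk
    rw [← ContinuousLinearMap.adjoint_inner_right]
    exact (Submodule.mem_orthogonal' _ _).1 (sub_projCLM_mem_orthogonal K x) _ (h2 k hk)
  rw [hdec, map_add, projCLM_eq_self K (h1 _ (projCLM_apply_mem K x)),
    projCLM_eq_zero K h3, add_zero]

lemma map_closure_span (T : H →L[ℂ] H) (S : Set H) (K : Submodule ℂ H)
    (hK : IsClosed (K : Set H)) (h : ∀ s ∈ S, T s ∈ K) :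
    ∀ x ∈ (Submodule.span ℂ S).topologicalClosure, T x ∈ K := by
  have hle : (Submodule.span ℂ S).topologicalClosure ≤ Submodule.comap (T : H →ₗ[ℂ] H) K := by
    apply Submodule.topologicalClosure_minimal
    · rw [Submodule.span_le]
      exact fun s hs => h s hs
    · exact hK.preimage T.continuous
  exact fun x hx => hle hx

lemma inner_eq_zero_of_mem_closure_span (η : H) (S : Set H)
    (h : ∀ s ∈ S, (inner ℂ η s : ℂ) = 0) :
    ∀ x ∈ (Submodule.span ℂ S).topologicalClosure, (inner ℂ η x : ℂ) = 0 := by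
  have hle : (Submodule.span ℂ S).topologicalClosure ≤ LinearMap.ker (innerSL ℂ η : H →ₗ[ℂ] ℂ) := by
    apply Submodule.topologicalClosure_minimal
    · rw [Submodule.span_le]
      intro s hs
      simpa using h s hs
    · exact ContinuousLinearMap.isClosed_ker _
  intro x hx
  simpa using hle hx

end Helpers
lemma exists_separating (V : Set (H →L[ℂ] H))
    (h0 : (0 : H →L[ℂ] H) ∈ V)
    (hadd : ∀ a b : H →L[ℂ] H, a ∈ V → b ∈ V → a + b ∈ V)
    (hsmul : ∀ (c : ℂ) (a : H →L[ℂ] H), a ∈ V → c • a ∈ V)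
    (hcl : IsWeakStarClosed V)
    {v : H →L[ℂ] H} (hv : v ∉ V) :
    ∃ ξ η : ampSpace H,
      (∀ a ∈ V, (∑' n, (inner ℂ (a (ξ n)) (η n) : ℂ)) = 0) ∧
      (∑' n, (inner ℂ (v (ξ n)) (η n) : ℂ)) ≠ 0 := by
  classical
  set Idx := {xe : (ℕ → H) × (ℕ → H) //
      Summable (fun n => ‖xe.1 n‖ ^ 2) ∧ Summable (fun n => ‖xe.2 n‖ ^ 2)} with hIdx
  set F : (H →L[ℂ] H) → Idx → ℂ :=
    fun a p => ∑' n, (inner ℂ (a (p.1.1 n)) (p.1.2 n) : ℂ) with hF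
  -- extract a closed set in the product space
  have hcl' : @IsClosed _ (TopologicalSpace.induced F inferInstance) V := hcl
  rw [isClosed_induced_iff] at hcl'
  obtain ⟨T, hTc, hTV⟩ := hcl'
  have hvT : F v ∈ Tᶜ := fun hmem => hv (hTV ▸ hmem)
  have hTo : IsOpen Tᶜ := hTc.isOpen_compl
  rw [isOpen_pi_iff] at hTo
  obtain ⟨I, uu, h1, h2⟩ := hTo (F v) hvT
  -- linearity of the pairing functionals
  have F_add : ∀ (x y : H →L[ℂ] H) (p : Idx), F (x + y) p = F x p + F y p := by
    intro x y p
    have hs1 := summable_inner_op x p.2.1 p.2.2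
    have hs2 := summable_inner_op y p.2.1 p.2.2
    rw [hF]
    dsimp only
    rw [← Summable.tsum_add hs1 hs2]
    exact tsum_congr fun n => by
      rw [ContinuousLinearMap.add_apply, inner_add_left]
  have F_zero : ∀ p : Idx, F 0 p = 0 := by
    intro p; rw [hF]; dsimp only
    simp
  have F_csmul : ∀ (cc : ℂ) (x : H →L[ℂ] H) (p : Idx),
      F ((starRingEnd ℂ cc) • x) p = cc * F x p := by
    intro cc x p
    rw [hF]; dsimp only
    rw [← tsum_mul_left]
    exact tsum_congr fun n => by
      rw [ContinuousLinearMap.smul_apply, inner_smul_left, starRingEnd_self_apply]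
  -- the image of V in the finite-dimensional coordinate space
  set Ω : (H →L[ℂ] H) → (↥I → ℂ) := fun x i => F x (i : Idx) with hΩ
  set W : Submodule ℂ (↥I → ℂ) :=
    { carrier := Ω '' V
      zero_mem' := ⟨0, h0, by funext i; exact F_zero _⟩
      add_mem' := by
        rintro z₁ z₂ ⟨x₁, hx₁, rfl⟩ ⟨x₂, hx₂, rfl⟩
        exact ⟨x₁ + x₂, hadd _ _ hx₁ hx₂, by funext i; exact F_add _ _ _⟩
      smul_mem' := by
        rintro cc z ⟨x, hx, rfl⟩
        exact ⟨(starRingEnd ℂ cc) • x, hsmul _ _ hx, by funext i; exact F_csmul _ _ _⟩ }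
    with hW
  have hΩvW : Ω v ∉ W := by
    rintro ⟨x, hxV, hxΩ⟩
    have hxT : F x ∈ T := by rw [← hTV] at hxV; exact hxV
    have : F x ∈ (I : Set Idx).pi uu := by
      rw [Set.mem_pi]
      intro i hi
      have : F x i = F v i := by
        have := congrFun hxΩ ⟨i, hi⟩
        exact this.trans rfl
      rw [this]
      exact (h1 i hi).2
    exact (h2 this) hxT
  -- separating functional in finite dimensions
  obtain ⟨f, hfv, hfW⟩ := Submodule.exists_dual_map_eq_bot_of_notMem hΩvW inferInstance
  have hfV : ∀ a ∈ V, f (Ω a) = 0 := by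
    intro a ha
    have : f (Ω a) ∈ W.map f := Submodule.mem_map_of_mem ⟨a, ha, rfl⟩
    rw [hfW] at this
    simpa using this
  -- I is nonempty
  have hne : Nonempty ↥I := by
    rcases isEmpty_or_nonempty ↥I with he | hne
    · exact absurd (by rw [Subsingleton.elim (Ω v) 0]; exact W.zero_mem) hΩvW
    · exact hne
  haveI := hne
  -- expand f in coordinates
  set c : ↥I → ℂ := fun i => f (Pi.single i 1) with hc
  have hf_expand : ∀ z : ↥I → ℂ, f z = ∑ i, z i * c i := by
    intro z
    have hz : f z = ∑ i, f (Pi.single i (z i)) := by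
      conv_lhs => rw [← Finset.univ_sum_single z]
      rw [map_sum]
    rw [hz]
    apply Finset.sum_congr rfl
    intro i _
    have hsingle : Pi.single i (z i) = z i • (Pi.single i (1:ℂ) : ↥I → ℂ) := by
      funext j
      by_cases h : j = i
      · subst h; simp
      · simp [Pi.single_apply, h]
    rw [hsingle, map_smul, smul_eq_mul, hc]
  -- pack the finite family into a single pair of ℓ² sequences
  haveI : Infinite (↥I × ℕ) := inferInstance
  obtain ⟨d⟩ := nonempty_denumerable (↥I × ℕ)
  set e : ↥I × ℕ ≃ ℕ := @Denumerable.eqv _ d with he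
  set ξ' : ↥I × ℕ → H := fun p => (p.1 : Idx).val.1 p.2 with hξ'
  set η' : ↥I × ℕ → H := fun p => c p.1 • (p.1 : Idx).val.2 p.2 with hη'
  have hsξ' : Summable fun p : ↥I × ℕ => ‖ξ' p‖ ^ 2 := by
    rw [summable_prod_of_nonneg (fun p => by positivity)]
    exact ⟨fun i => (i : Idx).prop.1, Summable.of_finite⟩
  have hsη' : Summable fun p : ↥I × ℕ => ‖η' p‖ ^ 2 := by
    rw [summable_prod_of_nonneg (fun p => by positivity)]
    constructor
    · intro i
      have : (fun n => ‖η' (i, n)‖ ^ 2) = fun n => ‖c i‖ ^ 2 * ‖(i : Idx).val.2 n‖ ^ 2 := by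
        funext n
        rw [hη']
        dsimp only
        rw [norm_smul, mul_pow]
      rw [this]
      exact ((i : Idx).prop.2).mul_left _
    · exact Summable.of_finite
  set ξhat : ampSpace H := ⟨fun n => ξ' (e.symm n),
    memℓp_of_sq_summable ((e.symm.summable_iff (f := fun p => ‖ξ' p‖ ^ 2)).2 hsξ')⟩ with hξhat
  set ηhat : ampSpace H := ⟨fun n => η' (e.symm n),
    memℓp_of_sq_summable ((e.symm.summable_iff (f := fun p => ‖η' p‖ ^ 2)).2 hsη')⟩ with hηhat
  have hcoe : ∀ n, (ξhat n = ξ' (e.symm n)) ∧ (ηhat n = η' (e.symm n)) :=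
    fun n => ⟨rfl, rfl⟩
  -- the value of the packed pairing
  have hval : ∀ x : H →L[ℂ] H,
      (∑' n, (inner ℂ (x (ξhat n)) (ηhat n) : ℂ)) = f (Ω x) := by
    intro x
    have e1 : (∑' n, (inner ℂ (x (ξhat n)) (ηhat n) : ℂ))
        = ∑' p : ↥I × ℕ, (inner ℂ (x (ξ' p)) (η' p) : ℂ) := by
      rw [← Equiv.tsum_eq e.symm (fun p => (inner ℂ (x (ξ' p)) (η' p) : ℂ))]
    have hsum : Summable fun p : ↥I × ℕ => (inner ℂ (x (ξ' p)) (η' p) : ℂ) :=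
      summable_inner_op x hsξ' hsη'
    have hfib : ∀ i : ↥I, Summable fun n => (inner ℂ (x (ξ' (i, n))) (η' (i, n)) : ℂ) := by
      intro i
      apply summable_inner_op x (i : Idx).prop.1
      have : (fun n => ‖η' (i, n)‖ ^ 2) = fun n => ‖c i‖ ^ 2 * ‖(i : Idx).val.2 n‖ ^ 2 := by
        funext n; rw [hη']; dsimp only; rw [norm_smul, mul_pow]
      rw [this]
      exact ((i : Idx).prop.2).mul_left _
    have e2 : (∑' p : ↥I × ℕ, (inner ℂ (x (ξ' p)) (η' p) : ℂ))
        = ∑' i : ↥I, ∑' n : ℕ, (inner ℂ (x (ξ' (i, n))) (η' (i, n)) : ℂ) :=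
      Summable.tsum_prod' hsum hfib
    have e3 : ∀ i : ↥I, (∑' n : ℕ, (inner ℂ (x (ξ' (i, n))) (η' (i, n)) : ℂ))
        = F x (i : Idx) * c i := by
      intro i
      rw [mul_comm, ← tsum_mul_left]
      exact tsum_congr fun n => by
        simp only [hξ', hη', inner_smul_right]
    rw [e1, e2, tsum_fintype, hf_expand]
    exact Finset.sum_congr rfl fun i _ => e3 i
  exact ⟨ξhat, ηhat, fun a ha => (hval a).trans (hfV a ha), by rw [hval v]; exact hfv⟩


lemma mem_of_projections (M : VonNeumannAlgebra H) (V : Set (H →L[ℂ] H)) (hV : IsQRel M V)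
    {amp : (H →L[ℂ] H) → (ampSpace H →L[ℂ] ampSpace H)} (hamp : IsAmplification amp)
    (v : H →L[ℂ] H)
    (hv : ∀ p q : ampSpace H →L[ℂ] ampSpace H,
      IsAmpProjection M amp p → IsAmpProjection M amp q →
      (∀ a ∈ V, p * amp a * q = 0) → p * amp v * q = 0) :
    v ∈ V := by
  by_contra hvV
  obtain ⟨ξ, η, hsep0, hsepv⟩ :=
    exists_separating V hV.zero_mem hV.add_mem hV.smul_mem hV.weakStarClosed hvV
  set SL : Set (ampSpace H) := {z | ∃ b ∈ M.commutant, z = amp b ξ} with hSL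
  set SK : Set (ampSpace H) := {z | ∃ c ∈ V, z = amp c ξ} with hSK
  set L : Submodule ℂ (ampSpace H) := (Submodule.span ℂ SL).topologicalClosure with hL
  set K : Submodule ℂ (ampSpace H) := (Submodule.span ℂ SK).topologicalClosure with hK
  have hLclosed : IsClosed (L : Set (ampSpace H)) := Submodule.isClosed_topologicalClosure _
  have hKclosed : IsClosed (K : Set (ampSpace H)) := Submodule.isClosed_topologicalClosure _
  haveI : CompleteSpace L := hLclosed.completeSpace_coe
  haveI : CompleteSpace K := hKclosed.completeSpace_coe
  set q : ampSpace H →L[ℂ] ampSpace H := projCLM L with hq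
  set p : ampSpace H →L[ℂ] ampSpace H := 1 - projCLM K with hp
  -- soundness of generators
  have hSLsub : SL ⊆ L := fun z hz =>
    Submodule.le_topologicalClosure _ (Submodule.subset_span hz)
  have hSKsub : SK ⊆ K := fun z hz =>
    Submodule.le_topologicalClosure _ (Submodule.subset_span hz)
  -- q is an M-amplified projection
  have hLinv : ∀ b ∈ M.commutant, ∀ x ∈ L, amp b x ∈ L := by
    intro b hb
    apply map_closure_span (amp b) SL L hLclosed
    rintro s ⟨b', hb', rfl⟩
    exact hSLsub ⟨b * b', mul_mem hb hb', amp_comp hamp b b' ξ⟩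
  have hqcomm : ∀ b ∈ M.commutant, amp b * q = q * amp b := by
    intro b hb
    apply projCLM_comm L (amp b) (hLinv b hb)
    rw [amp_adjoint hamp]
    refine hLinv _ ?_
    rw [← ContinuousLinearMap.star_eq_adjoint]
    exact star_mem hb
  have hqproj : IsAmpProjection M amp q := ⟨projCLM_idem L, projCLM_sa L, hqcomm⟩
  -- p is an M-amplified projection
  have hKinv : ∀ b ∈ M.commutant, ∀ x ∈ K, amp b x ∈ K := by
    intro b hb
    apply map_closure_span (amp b) SK K hKclosed
    rintro s ⟨c, hc, rfl⟩
    refine hSKsub ⟨b * c, ?_, amp_comp hamp b c ξ⟩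
    have := hV.bimodule b hb c hc 1 (one_mem _)
    simpa using this
  have hKcomm : ∀ b ∈ M.commutant, amp b * projCLM K = projCLM K * amp b := by
    intro b hb
    apply projCLM_comm K (amp b) (hKinv b hb)
    rw [amp_adjoint hamp]
    refine hKinv _ ?_
    rw [← ContinuousLinearMap.star_eq_adjoint]
    exact star_mem hb
  have hpcomm : ∀ b ∈ M.commutant, amp b * p = p * amp b := by
    intro b hb
    rw [hp, mul_sub, sub_mul, mul_one, one_mul, hKcomm b hb]
  have hpproj : IsAmpProjection M amp p := by
    refine ⟨(projCLM_idem K).one_sub, ?_, hpcomm⟩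
    exact (IsSelfAdjoint.one _).sub (projCLM_sa K)
  -- p ∘ amp a ∘ q = 0 for a ∈ V
  have hzero : ∀ a ∈ V, p * amp a * q = 0 := by
    intro a ha
    have hmap : ∀ x ∈ L, amp a x ∈ K := by
      apply map_closure_span (amp a) SL K hKclosed
      rintro s ⟨b', hb', rfl⟩
      refine hSKsub ⟨a * b', ?_, amp_comp hamp a b' ξ⟩
      have := hV.bimodule 1 (one_mem _) a ha b' hb'
      simpa using this
    ext z
    rw [ContinuousLinearMap.mul_apply, ContinuousLinearMap.mul_apply]
    have hz : amp a (q z) ∈ K := hmap _ (projCLM_apply_mem L z)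
    rw [hp]
    rw [ContinuousLinearMap.sub_apply, ContinuousLinearMap.one_apply,
      projCLM_eq_self K hz, sub_self]
    rfl
  -- contradiction at v
  have hfinal : p * amp v * q = 0 := hv p q hpproj hqproj hzero
  have hξL : ξ ∈ L := hSLsub ⟨1, one_mem _, (amp_one hamp ξ).symm⟩
  have hqξ : q ξ = ξ := projCLM_eq_self L hξL
  have hηK : ∀ z ∈ K, (inner ℂ η z : ℂ) = 0 := by
    apply inner_eq_zero_of_mem_closure_span η SK
    rintro s ⟨c, hc, rfl⟩
    rw [← inner_conj_symm, amp_inner hamp, hsep0 c hc, map_zero]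
  have hvalue : (inner ℂ ((p * amp v * q) ξ) η : ℂ) = ∑' n, (inner ℂ (v (ξ n)) (η n) : ℂ) := by
    rw [ContinuousLinearMap.mul_apply, ContinuousLinearMap.mul_apply, hqξ, hp,
      ContinuousLinearMap.sub_apply, ContinuousLinearMap.one_apply, inner_sub_left]
    have h1 : (inner ℂ (projCLM K (amp v ξ)) η : ℂ) = 0 := by
      rw [← inner_conj_symm, hηK _ (projCLM_apply_mem K _), map_zero]
    rw [h1, sub_zero, amp_inner hamp]
  rw [hfinal] at hvalue
  simp only [ContinuousLinearMap.zero_apply, inner_zero_left] at hvalue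
  exact hsepv hvalue.symm

/-- Let `φ : M → N`, `φ(a) = u* a u`, be a surjective, spatially implemented quantum
function (unital weak*-continuous *-homomorphism) between quantum coarse spaces
`(M ⊆ B(H₁), 𝒱)` and `(N ⊆ B(H₂), 𝒰)`, with `u : H₂ → H₁` an isometry, `r = u u*` a
central projection of `M`, and `ker φ = (1 - r) M`.  If `φ` is quantum coarse, then
`b ↦ u b u*` is an isometric *-homomorphism of `C*_u(N, 𝒰)` into `C*_u(M, 𝒱)`. -/
theorem statement17 {H₁ H₂ : Type u}
    [NormedAddCommGroup H₁] [InnerProductSpace ℂ H₁] [CompleteSpace H₁]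
    [NormedAddCommGroup H₂] [InnerProductSpace ℂ H₂] [CompleteSpace H₂]
    (M : VonNeumannAlgebra H₁) (N : VonNeumannAlgebra H₂)
    (𝒱 : Set (Set (H₁ →L[ℂ] H₁))) (𝒰 : Set (Set (H₂ →L[ℂ] H₂)))
    (h𝒱 : IsQCoarse M 𝒱) (h𝒰 : IsQCoarse N 𝒰)
    (u : H₂ →L[ℂ] H₁) (r : H₁ →L[ℂ] H₁)
    -- `u` is an isometry:
    (hu : (ContinuousLinearMap.adjoint u) ∘L u = 1)
    -- with `u u* = r`, a central projection of `M`: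
    (hr : u ∘L (ContinuousLinearMap.adjoint u) = r)
    (hrM : r ∈ M) (hrcentral : ∀ x ∈ M, r * x = x * r)
    -- `φ = u* · u` maps `M` onto `N`:
    (hmaps : ∀ a ∈ M, (ContinuousLinearMap.adjoint u) ∘L a ∘L u ∈ N)
    (hsurj : ∀ b ∈ N, ∃ a ∈ M, (ContinuousLinearMap.adjoint u) ∘L a ∘L u = b)
    -- `ker φ = (1 - r) M`:
    (hker : ∀ a ∈ M,
      ((ContinuousLinearMap.adjoint u) ∘L a ∘L u = 0 ↔ ∃ m ∈ M, a = (1 - r) * m))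
    -- amplifications `a ↦ a ⊗ 1` on both sides and `u ⊗ 1`:
    (ampM : (H₁ →L[ℂ] H₁) → (ampSpace H₁ →L[ℂ] ampSpace H₁)) (hampM : IsAmplification ampM)
    (ampN : (H₂ →L[ℂ] H₂) → (ampSpace H₂ →L[ℂ] ampSpace H₂)) (hampN : IsAmplification ampN)
    (Uamp : ampSpace H₂ →L[ℂ] ampSpace H₁) (hUamp : ∀ (ξ : ampSpace H₂) (n : ℕ), (Uamp ξ) n = u (ξ n))
    -- `φ` is quantum coarse: for every `U ∈ 𝒰` there is `V ∈ 𝒱` such that for all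
    -- projections `p, q` of `M ⊗̄ B(ℓ²)`,
    -- `((u⊗1)* p (u⊗1), (u⊗1)* q (u⊗1)) ∈ R_U → (p, q) ∈ R_V`:
    (hcoarse : ∀ W ∈ 𝒰, ∃ V ∈ 𝒱,
      ∀ p q : ampSpace H₁ →L[ℂ] ampSpace H₁,
        IsAmpProjection M ampM p → IsAmpProjection M ampM q →
        (∃ a ∈ W,
          ((ContinuousLinearMap.adjoint Uamp) ∘L p ∘L Uamp) * ampN a *
            ((ContinuousLinearMap.adjoint Uamp) ∘L q ∘L Uamp) ≠ 0) →
        (∃ a ∈ V, p * ampM a * q ≠ 0)) :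
    -- `b ↦ u b u*` maps `C*_u(N,𝒰)` into `C*_u(M,𝒱)` …
    (∀ b ∈ closure (⋃₀ 𝒰), u ∘L b ∘L (ContinuousLinearMap.adjoint u) ∈ closure (⋃₀ 𝒱)) ∧
    -- … isometrically …
    (∀ b : H₂ →L[ℂ] H₂, ‖u ∘L b ∘L (ContinuousLinearMap.adjoint u)‖ = ‖b‖) ∧
    -- … multiplicatively …
    (∀ b₁ b₂ : H₂ →L[ℂ] H₂,
      u ∘L (b₁ * b₂) ∘L (ContinuousLinearMap.adjoint u) =
        (u ∘L b₁ ∘L (ContinuousLinearMap.adjoint u)) *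
          (u ∘L b₂ ∘L (ContinuousLinearMap.adjoint u))) ∧
    -- … and *-preservingly:
    (∀ b : H₂ →L[ℂ] H₂,
      u ∘L (star b) ∘L (ContinuousLinearMap.adjoint u) =
        star (u ∘L b ∘L (ContinuousLinearMap.adjoint u))) := by
  classical
  set ud := ContinuousLinearMap.adjoint u with hud
  have hu_apply : ∀ z : H₂, ud (u z) = z := by
    intro z
    have := ContinuousLinearMap.ext_iff.1 hu z
    simpa using this
  have hr_apply : ∀ y : H₁, u (ud y) = r y := by
    intro y
    have := ContinuousLinearMap.ext_iff.1 hr y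
    simpa using this
  have hnorm_u : ∀ z : H₂, ‖u z‖ = ‖z‖ := by
    intro z
    have hinner : (inner ℂ (u z) (u z) : ℂ) = inner ℂ z z := by
      rw [← ContinuousLinearMap.adjoint_inner_right, hu_apply]
    have h2 : ‖u z‖ ^ 2 = ‖z‖ ^ 2 := by
      rw [← @inner_self_eq_norm_sq ℂ, ← @inner_self_eq_norm_sq ℂ, hinner]
    have := congrArg Real.sqrt h2
    simpa [Real.sqrt_sq, norm_nonneg] using this
  have hud_norm : ∀ y : H₁, ‖ud y‖ ≤ ‖y‖ := by
    intro y
    have h1 : (inner ℂ (ud y) (ud y) : ℂ) = inner ℂ y (u (ud y)) :=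
      ContinuousLinearMap.adjoint_inner_left u (ud y) y
    have h2 : ‖ud y‖ ^ 2 = RCLike.re (inner ℂ y (u (ud y)) : ℂ) := by
      rw [← h1, @inner_self_eq_norm_sq ℂ]
    have h3 : RCLike.re (inner ℂ y (u (ud y)) : ℂ) ≤ ‖y‖ * ‖u (ud y)‖ := by
      calc RCLike.re (inner ℂ y (u (ud y)) : ℂ) ≤ |RCLike.re (inner ℂ y (u (ud y)) : ℂ)| :=
            le_abs_self _
        _ ≤ ‖(inner ℂ y (u (ud y)) : ℂ)‖ := RCLike.abs_re_le_norm _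
        _ ≤ ‖y‖ * ‖u (ud y)‖ := norm_inner_le_norm _ _
    rw [hnorm_u] at h3
    nlinarith [norm_nonneg (ud y), norm_nonneg y, h2]
  -- the isometric property
  have hiso : ∀ b : H₂ →L[ℂ] H₂, ‖u ∘L b ∘L ud‖ = ‖b‖ := by
    intro b
    apply le_antisymm
    · apply ContinuousLinearMap.opNorm_le_bound _ (norm_nonneg b)
      intro x
      rw [ContinuousLinearMap.comp_apply, ContinuousLinearMap.comp_apply, hnorm_u]
      calc ‖b (ud x)‖ ≤ ‖b‖ * ‖ud x‖ := b.le_opNorm _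
        _ ≤ ‖b‖ * ‖x‖ := by
            exact mul_le_mul_of_nonneg_left (hud_norm x) (norm_nonneg b)
    · apply ContinuousLinearMap.opNorm_le_bound _ (norm_nonneg _)
      intro x
      have hbx : b x = ud ((u ∘L b ∘L ud) (u x)) := by
        rw [ContinuousLinearMap.comp_apply, ContinuousLinearMap.comp_apply, hu_apply,
          hu_apply]
      rw [hbx]
      calc ‖ud ((u ∘L b ∘L ud) (u x))‖ ≤ ‖(u ∘L b ∘L ud) (u x)‖ := hud_norm _
        _ ≤ ‖u ∘L b ∘L ud‖ * ‖u x‖ := ContinuousLinearMap.le_opNorm _ _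
        _ = ‖u ∘L b ∘L ud‖ * ‖x‖ := by rw [hnorm_u]
  refine ⟨?_, hiso, ?_, ?_⟩
  · -- main part
    intro b hb
    have hlin : ∀ b₁ b₂ : H₂ →L[ℂ] H₂,
        (u ∘L b₁ ∘L ud) - (u ∘L b₂ ∘L ud) = u ∘L (b₁ - b₂) ∘L ud := by
      intro b₁ b₂; ext x
      simp [ContinuousLinearMap.comp_apply]
    have hcont : Continuous (fun b : H₂ →L[ℂ] H₂ => u ∘L b ∘L ud) := by
      apply (LipschitzWith.of_dist_le_mul (K := 1) ?_).continuous
      intro b₁ b₂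
      rw [dist_eq_norm, dist_eq_norm, hlin, hiso]
      simp
    refine map_mem_closure (f := fun b : H₂ →L[ℂ] H₂ => u ∘L b ∘L ud) hcont hb ?_
    rintro b' ⟨U, hU, hb'U⟩
    obtain ⟨V, hV, hcV⟩ := hcoarse U hU
    refine ⟨V, hV, ?_⟩
    apply mem_of_projections M V (h𝒱.qrel V hV) hampM
    intro p q hpP hqP hVzero
    have hb0 : ((ContinuousLinearMap.adjoint Uamp) ∘L p ∘L Uamp) * ampN b' *
        ((ContinuousLinearMap.adjoint Uamp) ∘L q ∘L Uamp) = 0 := by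
      by_contra hne
      obtain ⟨a, ha, hane⟩ := hcV p q hpP hqP ⟨b', hb'U, hne⟩
      exact hane (hVzero a ha)
    set Ud := ContinuousLinearMap.adjoint Uamp with hUd
    have hUdapp : ∀ (ζ : ampSpace H₁) (n : ℕ), (Ud ζ) n = ud (ζ n) := by
      intro ζ n
      apply ext_inner_left ℂ
      intro x
      calc (inner ℂ x ((Ud ζ) n) : ℂ)
          = inner ℂ (lp.single 2 n x) (Ud ζ) := (lp.inner_single_left n x (Ud ζ)).symm
        _ = inner ℂ (Uamp (lp.single 2 n x)) ζ :=
            ContinuousLinearMap.adjoint_inner_right Uamp (lp.single 2 n x) ζ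
        _ = ∑' m, (inner ℂ ((Uamp (lp.single 2 n x)) m) (ζ m) : ℂ) := lp.inner_eq_tsum _ _
        _ = inner ℂ (u x) (ζ n) := ?_
        _ = inner ℂ x (ud (ζ n)) :=
            (ContinuousLinearMap.adjoint_inner_right u x (ζ n)).symm
      rw [tsum_eq_single n ?_]
      · rw [hUamp]
        congr 1
        exact congrArg u (lp.single_apply_self (E := fun _ : ℕ => H₂) 2 n x)
      · intro m hm
        rw [hUamp, lp.single_apply_ne (E := fun _ : ℕ => H₂) 2 n x hm]
        simp
    have pt1 : ∀ ζ : ampSpace H₁, ampM (u ∘L b' ∘L ud) ζ = Uamp (ampN b' (Ud ζ)) := by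
      intro ζ; apply lp.ext; funext n
      rw [hampM, hUamp, hampN, hUdapp]
      rfl
    have pt2 : ∀ ζ : ampSpace H₁, Uamp (Ud ζ) = ampM r ζ := by
      intro ζ; apply lp.ext; funext n
      rw [hUamp, hUdapp, hampM, hr_apply]
    have ptRU : ∀ w : ampSpace H₂, ampM r (Uamp w) = Uamp w := by
      intro w; apply lp.ext; funext n
      rw [hampM, hUamp, ← hr_apply, hu_apply]
    have pt4 : ∀ ζ : ampSpace H₁, Ud (ampM r ζ) = Ud ζ := by
      intro ζ; apply lp.ext; funext n
      rw [hUdapp, hUdapp, hampM, ← hr_apply, hu_apply]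
    have hrmem : r ∈ M.commutant := by
      rw [VonNeumannAlgebra.mem_commutant_iff]
      intro g hg
      exact (hrcentral g hg).symm
    have pt5 : ∀ w, ampM r (p w) = p (ampM r w) := by
      intro w
      have := ContinuousLinearMap.ext_iff.1 (hpP.2.2 r hrmem) w
      simpa [ContinuousLinearMap.mul_apply] using this
    have pt6 : ∀ w, q (ampM r w) = ampM r (q w) := by
      intro w
      have := ContinuousLinearMap.ext_iff.1 (hqP.2.2 r hrmem) w
      simpa [ContinuousLinearMap.mul_apply] using this.symm
    ext ζ
    have hkey : (p * ampM (u ∘L b' ∘L ud) * q) ζ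
        = Uamp (((Ud ∘L p ∘L Uamp) * ampN b' * (Ud ∘L q ∘L Uamp)) (Ud ζ)) := by
      simp only [ContinuousLinearMap.mul_apply, ContinuousLinearMap.comp_apply]
      rw [pt1, pt2 ζ, pt2, pt6, pt4, pt5, ptRU]
    rw [hkey, hb0]
    simp
  · -- multiplicative
    intro b₁ b₂
    ext x
    simp only [ContinuousLinearMap.mul_apply, ContinuousLinearMap.comp_apply, hu_apply]
  · -- star preserving
    intro b
    rw [ContinuousLinearMap.star_eq_adjoint, ContinuousLinearMap.star_eq_adjoint,
      ContinuousLinearMap.adjoint_comp, ContinuousLinearMap.adjoint_comp,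
      ContinuousLinearMap.adjoint_adjoint, ← hud, ContinuousLinearMap.comp_assoc]

end QCG
end
end
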